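/- arXiv:2410.04897 — 8 statements merged into one kernel-verified Lean document; each statement's English description precedes it below -/
import Mathlib

section
/- Let D = (V, A) be a finite digraph and k ≥ 0 an integer. Let Π_k be the digraph whose vertices are the subsets of V, with an arc from V₁ to V₂ whenever V₂ ⊆ N⁺(V₁) and |N⁺(V₁) \ V₂| ≤ k, and additionally an arc from the full set V to every subset W ⊆ V with |W| ≥ |V| − k. Then there exists a directed path in Π_k from the vertex V to the vertex ∅ if and only if there is a winning cop strategy on D using k cops. -/
open scoped Classical

/-- The out-neighborhood of a set `S` in the digraph with arc relation `A`. -/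
noncomputable def Nplus {V : Type} [Fintype V] (A : V → V → Prop) (S : Finset V) : Finset V :=
  Finset.univ.filter (fun y => ∃ x ∈ S, A x y)

/-- The robber territories associated with a cop strategy `W` (0-indexed:
`terr A W i` is the paper's `R_{i+1}`). -/
noncomputable def terr {V : Type} [Fintype V] [DecidableEq V]
    (A : V → V → Prop) (W : ℕ → Finset V) : ℕ → Finset V
  | 0 => Finset.univ \ W 0
  | i + 1 => Nplus A (terr A W i) \ W (i + 1)

/-- A cop strategy uses at most `k` cops. -/
def UsesAtMost {V : Type} (W : ℕ → Finset V) (k : ℕ) : Prop :=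
  ∀ i, (W i).card ≤ k

/-- The arc relation of the digraph `Π_k`: an arc from `V₁` to `V₂` whenever
`V₂ ⊆ N⁺(V₁)` and `|N⁺(V₁) \ V₂| ≤ k`, plus an arc from the full vertex set to
every `W` with `|W| ≥ |V| - k`. -/
noncomputable def PiArc {V : Type} [Fintype V] [DecidableEq V]
    (A : V → V → Prop) (k : ℕ) (S T : Finset V) : Prop :=
  (T ⊆ Nplus A S ∧ (Nplus A S \ T).card ≤ k) ∨
  (S = Finset.univ ∧ Fintype.card V - k ≤ T.card)

/-- Robber territories starting from an arbitrary set `S`, where `W i` is the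
cop move used to go from step `i` to step `i+1`. -/
noncomputable def terrFrom {V : Type} [Fintype V] [DecidableEq V]
    (A : V → V → Prop) (S : Finset V) (W : ℕ → Finset V) : ℕ → Finset V
  | 0 => S
  | i + 1 => Nplus A (terrFrom A S W i) \ W i

/-- There is a directed path in `Π_k` from the full vertex set to `∅` if and only if
`k` cops have a winning strategy. -/
theorem piPath_iff_winning {V : Type} [Fintype V] [DecidableEq V]
    (A : V → V → Prop) (k : ℕ) :
    Relation.ReflTransGen (PiArc A k) Finset.univ ∅ ↔
      ∃ W : ℕ → Finset V, UsesAtMost W k ∧ ∃ t, terr A W t = ∅ := by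
  constructor
  · intro h
    suffices H : ∀ S, Relation.ReflTransGen (PiArc A k) S ∅ →
        (∃ W, UsesAtMost W k ∧ ∃ t, terrFrom A S W t = ∅) ∨
        (∃ W : ℕ → Finset V, UsesAtMost W k ∧ ∃ t, terr A W t = ∅) by
      rcases H Finset.univ h with ⟨W, hW, t, ht⟩ | hc
      · refine ⟨fun n => Nat.casesOn n ∅ W, fun i => ?_, t, ?_⟩
        · cases i with
          | zero => simp
          | succ j => exact hW j
        · have key : ∀ n, terr A (fun n => Nat.casesOn n ∅ W) n
              = terrFrom A Finset.univ W n := by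
            intro n
            induction n with
            | zero => simp [terr, terrFrom]
            | succ n ih => simp [terr, terrFrom, ih]
          rw [key, ht]
      · exact hc
    clear h
    intro S hS
    induction hS using Relation.ReflTransGen.head_induction_on with
    | refl => exact Or.inl ⟨fun _ => ∅, fun i => Nat.zero_le k, 0, rfl⟩
    | head harc htail ih =>
      rename_i S' T
      rcases ih with ⟨W, hW, t, ht⟩ | hc
      · rcases harc with ⟨hsub, hcard⟩ | ⟨hSuniv, hTcard⟩
        · -- regular arc S → T, winning from T ⟹ winning from S
          refine Or.inl ⟨fun n => Nat.casesOn n (Nplus A S' \ T) W, fun i => ?_, t + 1, ?_⟩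
          · cases i with
            | zero => exact hcard
            | succ j => exact hW j
          · have key : ∀ n, terrFrom A S' (fun n => Nat.casesOn n (Nplus A S' \ T) W) (n + 1)
                = terrFrom A T W n := by
              intro n
              induction n with
              | zero =>
                show Nplus A S' \ (Nplus A S' \ T) = T
                rw [Finset.sdiff_sdiff_self_left, Finset.inter_eq_right.mpr hsub]
              | succ n ih =>
                show Nplus A _ \ W n = _
                rw [ih]; rfl
            rw [key, ht]
        · -- special arc: S = univ, |T| ≥ |V| - k
          refine Or.inr ⟨fun n => Nat.casesOn n (Finset.univ \ T) W, fun i => ?_, t, ?_⟩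
          · cases i with
            | zero =>
              show (Finset.univ \ T).card ≤ k
              rw [← Finset.compl_eq_univ_sdiff, Finset.card_compl]
              omega
            | succ j => exact hW j
          · have key : ∀ n, terr A (fun n => Nat.casesOn n (Finset.univ \ T) W) n
                = terrFrom A T W n := by
              intro n
              induction n with
              | zero =>
                show Finset.univ \ (Finset.univ \ T) = T
                rw [Finset.sdiff_sdiff_self_left,
                  Finset.inter_eq_right.mpr (Finset.subset_univ T)]
              | succ n ih => simp [terr, terrFrom, ih]
            rw [key, ht]
      · exact Or.inr hc
  · rintro ⟨W, hW, t, ht⟩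
    have key : ∀ n, Relation.ReflTransGen (PiArc A k) Finset.univ (terr A W n) := by
      intro n
      induction n with
      | zero =>
        refine Relation.ReflTransGen.single (Or.inr ⟨rfl, ?_⟩)
        show Fintype.card V - k ≤ (Finset.univ \ W 0).card
        rw [← Finset.compl_eq_univ_sdiff, Finset.card_compl]
        have := hW 0
        omega
      | succ n ih =>
        refine ih.tail (Or.inl ⟨Finset.sdiff_subset, ?_⟩)
        show (Nplus A (terr A W n) \ (Nplus A (terr A W n) \ W (n + 1))).card ≤ k
        rw [Finset.sdiff_sdiff_self_left]
        exact le_trans (Finset.card_le_card Finset.inter_subset_right) (hW (n + 1))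
    have := key t
    rwa [ht] at this
end

section
/- Let D = (V, A) be a finite digraph and let p ≥ 1 and k ≥ 0 be integers with p ≤ |V|. If every subset S ⊆ V with |S| = p satisfies |N⁺(S)| ≥ p + k, then cn(D) ≥ k + 1. -/
open scoped Classical

/-- The cop number: the least `k` admitting a winning strategy using `k` cops. -/
noncomputable def copNumber {V : Type} [Fintype V] [DecidableEq V] (A : V → V → Prop) : ℕ :=
  sInf {k | ∃ W : ℕ → Finset V, UsesAtMost W k ∧ ∃ t, terr A W t = ∅}

lemma Nplus_mono {V : Type} [Fintype V] (A : V → V → Prop) {S T : Finset V} (hST : S ⊆ T) :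
    Nplus A S ⊆ Nplus A T := by
  intro y hy
  simp only [Nplus, Finset.mem_filter, Finset.mem_univ, true_and] at hy ⊢
  obtain ⟨x, hx, hA⟩ := hy
  exact ⟨x, hST hx, hA⟩

/-- If `p ≤ |V|`, `p ≥ 1`, and every `p`-element subset `S` of `V` satisfies
`|N⁺(S)| ≥ p + k`, then `cn(D) ≥ k + 1`. -/
theorem copNumber_lower_bound {V : Type} [Fintype V] [DecidableEq V] (A : V → V → Prop)
    (p k : ℕ) (hp : 1 ≤ p) (hpn : p ≤ Fintype.card V)
    (h : ∀ S : Finset V, S.card = p → p + k ≤ (Nplus A S).card) :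
    k + 1 ≤ copNumber A := by
  -- first: p + k ≤ |V|
  have hcard : p + k ≤ Fintype.card V := by
    obtain ⟨S, _, hS⟩ := Finset.exists_subset_card_eq
      (show p ≤ (Finset.univ : Finset V).card by simpa using hpn)
    calc p + k ≤ (Nplus A S).card := h S hS
      _ ≤ Fintype.card V := by simpa using Finset.card_le_univ (Nplus A S)
  -- the set defining copNumber is nonempty (|V| cops win immediately)
  have hne : {m | ∃ W : ℕ → Finset V, UsesAtMost W m ∧ ∃ t, terr A W t = ∅}.Nonempty := by
    refine ⟨Fintype.card V, fun _ => Finset.univ, fun i => le_of_eq (Finset.card_univ), 0, ?_⟩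
    simp [terr]
  refine le_csInf hne ?_
  rintro m ⟨W, hW, t, ht⟩
  by_contra hlt
  push_neg at hlt
  have hm : m ≤ k := Nat.lt_succ_iff.mp hlt
  -- claim: every territory has at least p vertices
  have key : ∀ i, p ≤ (terr A W i).card := by
    intro i
    induction i with
    | zero =>
      have : Fintype.card V - m ≤ (terr A W 0).card := by
        have h2 := Finset.le_card_sdiff (W 0) (Finset.univ : Finset V)
        simpa [terr] using le_trans (Nat.sub_le_sub_left (hW 0) _) h2
      omega
    | succ i ih =>
      obtain ⟨S, hSsub, hS⟩ := Finset.exists_subset_card_eq ih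
      have h1 : p + k ≤ (Nplus A (terr A W i)).card :=
        le_trans (h S hS) (Finset.card_le_card (Nplus_mono A hSsub))
      have h2 := Finset.le_card_sdiff (W (i+1)) (Nplus A (terr A W i))
      have : (Nplus A (terr A W i)).card - m ≤ (terr A W (i+1)).card := by
        simpa [terr] using le_trans (Nat.sub_le_sub_left (hW (i+1)) _) h2
      omega
  have := key t
  rw [ht] at this
  simp at this
  omega
end

section
/- Let a_1, ..., a_n be positive integers with n = 3m for an integer m ≥ 1, let β = (a_1 + ... + a_n)/m (assumed to be an integer), and assume a_i > 2 and β/4 < a_i < β/2 for all i. Let D be the loop-free digraph whose vertex set is the disjoint union of sets V_1, ..., V_n with |V_i| = a_i and sets I_1, ..., I_{m+1} with |I_j| = β, whose arc set consists of: both arcs (u,v) and (v,u) for every two distinct vertices u, v in the same V_i; an arc from every vertex of V_1 ∪ ... ∪ V_n to every vertex of I_1; an arc from every vertex of I_j to every vertex of I_{j+1} for 1 ≤ j ≤ m; and an arc from every vertex of I_{m+1} to every vertex of V_1 ∪ ... ∪ V_n. Then cn(D) = β if and only if there exists a partition of {1, ..., n} into m triples such that the sum of the a_i over each triple equals β. 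-/
open scoped Classical

/-- The loop-free digraph of the 3-partition reduction.  Vertices: the disjoint union
of the cliques `V_i` (of size `a i`, for `i : Fin (3*m)`) and of the independent sets
`I_j` (of size `β`, for `j : Fin (m+1)`).  Arcs: both directions between distinct
vertices inside each `V_i`; from every vertex of `⋃ V_i` to every vertex of `I_1`
(index `j = 0`); from every vertex of `I_j` to every vertex of `I_{j+1}`; and from
every vertex of `I_{m+1}` (index `j = m`) to every vertex of `⋃ V_i`. -/
def threePartitionDigraph (m : ℕ) (a : Fin (3 * m) → ℕ) (β : ℕ) :
    ((Σ i : Fin (3 * m), Fin (a i)) ⊕ (Fin (m + 1) × Fin β)) →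
    ((Σ i : Fin (3 * m), Fin (a i)) ⊕ (Fin (m + 1) × Fin β)) → Prop
  | Sum.inl u, Sum.inl w => u.1 = w.1 ∧ u ≠ w
  | Sum.inl _, Sum.inr p => (p.1 : ℕ) = 0
  | Sum.inr p, Sum.inr q => (q.1 : ℕ) = (p.1 : ℕ) + 1
  | Sum.inr p, Sum.inl _ => (p.1 : ℕ) = m

namespace TPD

variable (m : ℕ) (a : Fin (3 * m) → ℕ) (β : ℕ)

local notation "X" => ((Σ i : Fin (3 * m), Fin (a i)) ⊕ (Fin (m + 1) × Fin β))

/-- the clique `V i` as a finset of vertices -/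
noncomputable def kv (i : Fin (3 * m)) : Finset X :=
  Finset.univ.filter (fun x => ∃ u : Fin (a i), x = Sum.inl ⟨i, u⟩)

/-- all clique vertices -/
noncomputable def kset : Finset X :=
  Finset.univ.filter (fun x => x.isLeft)

/-- the independent set `I j` (0-indexed by naturals; empty for `j > m`) -/
noncomputable def lset (j : ℕ) : Finset X :=
  Finset.univ.filter (fun x => ∃ p : Fin (m + 1) × Fin β, x = Sum.inr p ∧ (p.1 : ℕ) = j)

variable {m a β}

lemma mem_kv {i : Fin (3 * m)} {x : X} : x ∈ kv m a β i ↔ ∃ u : Fin (a i), x = Sum.inl ⟨i, u⟩ := by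
  simp [kv]

lemma mem_kset {x : X} : x ∈ kset m a β ↔ x.isLeft := by simp [kset]

lemma mem_lset {j : ℕ} {x : X} :
    x ∈ lset m a β j ↔ ∃ p : Fin (m + 1) × Fin β, x = Sum.inr p ∧ (p.1 : ℕ) = j := by
  simp [lset]

lemma kv_subset_kset {i : Fin (3 * m)} : kv m a β i ⊆ kset m a β := by
  intro x hx
  rcases mem_kv.1 hx with ⟨u, rfl⟩
  simp [mem_kset]

lemma mem_Nplus {A : X → X → Prop} {S : Finset X} {y : X} :
    y ∈ Nplus A S ↔ ∃ x ∈ S, A x y := by simp [Nplus]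

lemma card_kv {i : Fin (3 * m)} : (kv m a β i).card = a i := by
  have : kv m a β i = Finset.univ.image (fun u : Fin (a i) => (Sum.inl ⟨i, u⟩ : X)) := by
    ext x; simp [mem_kv, eq_comm]
  rw [this, Finset.card_image_of_injective]
  · simp
  · intro u v h
    simpa using h

lemma card_lset {j : ℕ} (hj : j ≤ m) : (lset m a β j).card = β := by
  have hjlt : j < m + 1 := Nat.lt_succ_of_le hj
  have : lset m a β j = Finset.univ.image (fun v : Fin β => (Sum.inr (⟨j, hjlt⟩, v) : X)) := by
    ext x
    simp only [mem_lset, Finset.mem_image, Finset.mem_univ, true_and]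
    constructor
    · rintro ⟨⟨p1, p2⟩, rfl, h⟩
      exact ⟨p2, by congr 2; exact Fin.ext h.symm⟩
    · rintro ⟨v, rfl⟩; exact ⟨_, rfl, rfl⟩
  rw [this, Finset.card_image_of_injective]
  · simp
  · intro u v h; simpa using h

lemma card_kset : (kset m a β).card = ∑ i, a i := by
  have : kset m a β = Finset.univ.image (Sum.inl : (Σ i : Fin (3 * m), Fin (a i)) → X) := by
    ext x
    cases x with
    | inl u => simp [mem_kset]
    | inr p => simp [mem_kset]
  rw [this, Finset.card_image_of_injective _ Sum.inl_injective]
  simp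

lemma kset_lset_disj {j : ℕ} : Disjoint (kset m a β) (lset m a β j) := by
  rw [Finset.disjoint_left]
  intro x hx hx'
  rcases mem_lset.1 hx' with ⟨p, rfl, _⟩
  simp [mem_kset] at hx

lemma lset_disj {j j' : ℕ} (h : j ≠ j') : Disjoint (lset m a β j) (lset m a β j') := by
  rw [Finset.disjoint_left]
  intro x hx hx'
  rcases mem_lset.1 hx with ⟨p, rfl, hp⟩
  rcases mem_lset.1 hx' with ⟨q, hq, hq'⟩
  cases hq
  exact h (hp ▸ hq' ▸ rfl)

lemma kv_disj {i i' : Fin (3 * m)} (h : i ≠ i') : Disjoint (kv m a β i) (kv m a β i') := by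
  rw [Finset.disjoint_left]
  intro x hx hx'
  rcases mem_kv.1 hx with ⟨u, rfl⟩
  rcases mem_kv.1 hx' with ⟨v, hv⟩
  simp only [Sum.inl.injEq] at hv
  exact h (congrArg Sigma.fst hv)

lemma kset_eq_biUnion : kset m a β = Finset.univ.biUnion (kv m a β) := by
  ext x
  simp only [Finset.mem_biUnion, Finset.mem_univ, true_and, mem_kset, mem_kv]
  cases x with
  | inl u => exact ⟨fun _ => ⟨u.1, u.2, by simp⟩, fun _ => rfl⟩
  | inr p => simp

lemma card_inter_kset (W : Finset X) :
    (W ∩ kset m a β).card = ∑ i, (W ∩ kv m a β i).card := by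
  have h1 : W ∩ kset m a β = Finset.univ.biUnion (fun i => W ∩ kv m a β i) := by
    rw [kset_eq_biUnion, Finset.inter_biUnion]
  rw [h1, Finset.card_biUnion]
  intro i _ i' _ h
  exact Finset.disjoint_of_subset_left Finset.inter_subset_right
    (Finset.disjoint_of_subset_right Finset.inter_subset_right (kv_disj h))

end TPD

namespace TPD

variable {m : ℕ} {a : Fin (3 * m) → ℕ} {β : ℕ}

local notation "X" => ((Σ i : Fin (3 * m), Fin (a i)) ⊕ (Fin (m + 1) × Fin β))
local notation "A" => threePartitionDigraph m a β

/-! ### arcs -/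

lemma arc_inl_inl {u w : Σ i : Fin (3 * m), Fin (a i)} :
    threePartitionDigraph m a β (Sum.inl u) (Sum.inl w) ↔ u.1 = w.1 ∧ u ≠ w := Iff.rfl

lemma arc_inl_inr {u : Σ i : Fin (3 * m), Fin (a i)} {p : Fin (m + 1) × Fin β} :
    threePartitionDigraph m a β (Sum.inl u) (Sum.inr p) ↔ (p.1 : ℕ) = 0 := Iff.rfl

lemma arc_inr_inr {p q : Fin (m + 1) × Fin β} :
    threePartitionDigraph m a β (Sum.inr p) (Sum.inr q) ↔ (q.1 : ℕ) = (p.1 : ℕ) + 1 := Iff.rfl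

lemma arc_inr_inl {p : Fin (m + 1) × Fin β} {u : Σ i : Fin (3 * m), Fin (a i)} :
    threePartitionDigraph m a β (Sum.inr p) (Sum.inl u) ↔ (p.1 : ℕ) = m := Iff.rfl

/-! ### transition lemmas -/

lemma lset0_subset_nplus {S : Finset X} (h : (S ∩ kset m a β).Nonempty) :
    lset m a β 0 ⊆ Nplus A S := by
  rcases h with ⟨x, hx⟩
  rcases Finset.mem_inter.1 hx with ⟨hxS, hxK⟩
  intro y hy
  rcases mem_lset.1 hy with ⟨p, rfl, hp⟩
  cases x with
  | inl u => exact mem_Nplus.2 ⟨Sum.inl u, hxS, arc_inl_inr.2 hp⟩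
  | inr q => simp [mem_kset] at hxK

lemma nplus_inter_lset0 {S : Finset X} (h : S ∩ kset m a β = ∅) :
    Nplus A S ∩ lset m a β 0 = ∅ := by
  rw [Finset.eq_empty_iff_forall_notMem]
  intro y hy
  rcases Finset.mem_inter.1 hy with ⟨hyN, hyL⟩
  rcases mem_lset.1 hyL with ⟨p, rfl, hp⟩
  rcases mem_Nplus.1 hyN with ⟨x, hxS, hA⟩
  cases x with
  | inl u =>
      have : Sum.inl u ∈ S ∩ kset m a β := Finset.mem_inter.2 ⟨hxS, by simp [mem_kset]⟩
      simp [h] at this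
  | inr q =>
      rw [arc_inr_inr] at hA
      omega

lemma lset_succ_subset_nplus {S : Finset X} {j : ℕ} (h : (S ∩ lset m a β j).Nonempty) :
    lset m a β (j + 1) ⊆ Nplus A S := by
  rcases h with ⟨x, hx⟩
  rcases Finset.mem_inter.1 hx with ⟨hxS, hxL⟩
  rcases mem_lset.1 hxL with ⟨p, rfl, hp⟩
  intro y hy
  rcases mem_lset.1 hy with ⟨q, rfl, hq⟩
  exact mem_Nplus.2 ⟨Sum.inr p, hxS, arc_inr_inr.2 (by omega)⟩

lemma nplus_inter_lset_succ {S : Finset X} {j : ℕ} (h : S ∩ lset m a β j = ∅) :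
    Nplus A S ∩ lset m a β (j + 1) = ∅ := by
  rw [Finset.eq_empty_iff_forall_notMem]
  intro y hy
  rcases Finset.mem_inter.1 hy with ⟨hyN, hyL⟩
  rcases mem_lset.1 hyL with ⟨q, rfl, hq⟩
  rcases mem_Nplus.1 hyN with ⟨x, hxS, hA⟩
  cases x with
  | inl u => rw [arc_inl_inr] at hA; omega
  | inr p =>
      rw [arc_inr_inr] at hA
      have : Sum.inr p ∈ S ∩ lset m a β j :=
        Finset.mem_inter.2 ⟨hxS, mem_lset.2 ⟨p, rfl, by omega⟩⟩
      simp [h] at this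

lemma kset_subset_nplus {S : Finset X} (h : (S ∩ lset m a β m).Nonempty) :
    kset m a β ⊆ Nplus A S := by
  rcases h with ⟨x, hx⟩
  rcases Finset.mem_inter.1 hx with ⟨hxS, hxL⟩
  rcases mem_lset.1 hxL with ⟨p, rfl, hp⟩
  intro y hy
  cases y with
  | inl w => exact mem_Nplus.2 ⟨Sum.inr p, hxS, arc_inr_inl.2 hp⟩
  | inr q => simp [mem_kset] at hy

lemma kv_subset_nplus {S : Finset X} {i : Fin (3 * m)} (h : 2 ≤ (S ∩ kv m a β i).card) :
    kv m a β i ⊆ Nplus A S := by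
  intro y hy
  rcases mem_kv.1 hy with ⟨v, rfl⟩
  obtain ⟨x, hx, hxy⟩ : ∃ x ∈ S ∩ kv m a β i, x ≠ Sum.inl ⟨i, v⟩ := by
    by_contra hcon
    push_neg at hcon
    have : S ∩ kv m a β i ⊆ {Sum.inl ⟨i, v⟩} := fun x hx => Finset.mem_singleton.2 (hcon x hx)
    have := Finset.card_le_card this
    simp at this
    omega
  rcases Finset.mem_inter.1 hx with ⟨hxS, hxK⟩
  rcases mem_kv.1 hxK with ⟨u, rfl⟩
  refine mem_Nplus.2 ⟨_, hxS, arc_inl_inl.2 ⟨rfl, ?_⟩⟩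
  intro hcon
  exact hxy (by rw [hcon])

/-- sources of arcs into a clique vertex are in the same clique or in layer m -/
lemma source_of_kv {S : Finset X} {i : Fin (3 * m)} {y : X}
    (hyN : y ∈ Nplus A S) (hyK : y ∈ kv m a β i) :
    (∃ x ∈ S ∩ kv m a β i, x ≠ y ∧ x ∈ kv m a β i) ∨ (S ∩ lset m a β m).Nonempty := by
  rcases mem_kv.1 hyK with ⟨v, rfl⟩
  rcases mem_Nplus.1 hyN with ⟨x, hxS, hA⟩
  cases x with
  | inl u =>
      rw [arc_inl_inl] at hA
      obtain ⟨h1, h2⟩ := hA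
      left
      have hxkv : Sum.inl u ∈ kv m a β i := by
        rcases u with ⟨i', w⟩
        simp only at h1
        subst h1
        exact mem_kv.2 ⟨w, rfl⟩
      exact ⟨Sum.inl u, Finset.mem_inter.2 ⟨hxS, hxkv⟩, by simpa using h2, hxkv⟩
  | inr p =>
      rw [arc_inr_inl] at hA
      right
      exact ⟨Sum.inr p, Finset.mem_inter.2 ⟨hxS, mem_lset.2 ⟨p, rfl, hA⟩⟩⟩

lemma nplus_inter_kv_empty {S : Finset X} {i : Fin (3 * m)}
    (hm : S ∩ lset m a β m = ∅) (h0 : S ∩ kv m a β i = ∅) :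
    Nplus A S ∩ kv m a β i = ∅ := by
  rw [Finset.eq_empty_iff_forall_notMem]
  intro y hy
  rcases Finset.mem_inter.1 hy with ⟨hyN, hyK⟩
  rcases source_of_kv hyN hyK with ⟨x, hx, _⟩ | hne
  · simp [h0] at hx
  · rw [hm] at hne; simp at hne

lemma nplus_inter_kv_singleton {S : Finset X} {i : Fin (3 * m)} {z : X}
    (hm : S ∩ lset m a β m = ∅) (h1 : S ∩ kv m a β i = {z}) :
    Nplus A S ∩ kv m a β i = kv m a β i \ {z} := by
  have hz : z ∈ kv m a β i := by
    have : z ∈ S ∩ kv m a β i := h1 ▸ Finset.mem_singleton_self z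
    exact (Finset.mem_inter.1 this).2
  have hzS : z ∈ S := by
    have : z ∈ S ∩ kv m a β i := h1 ▸ Finset.mem_singleton_self z
    exact (Finset.mem_inter.1 this).1
  ext y
  constructor
  · intro hy
    rcases Finset.mem_inter.1 hy with ⟨hyN, hyK⟩
    rcases source_of_kv hyN hyK with ⟨x, hx, hxy, _⟩ | hne
    · rw [h1] at hx
      rw [Finset.mem_singleton] at hx
      subst hx
      exact Finset.mem_sdiff.2 ⟨hyK, by simpa [eq_comm] using hxy⟩
    · rw [hm] at hne; simp at hne
  · intro hy
    rcases Finset.mem_sdiff.1 hy with ⟨hyK, hyz⟩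
    refine Finset.mem_inter.2 ⟨?_, hyK⟩
    rcases mem_kv.1 hyK with ⟨v, rfl⟩
    rcases mem_kv.1 hz with ⟨u, rfl⟩
    refine mem_Nplus.2 ⟨_, hzS, arc_inl_inl.2 ⟨rfl, ?_⟩⟩
    intro hcon
    rw [hcon] at hyz
    simp at hyz

lemma nplus_inter_kv_two {S : Finset X} {i : Fin (3 * m)} (h : 2 ≤ (S ∩ kv m a β i).card) :
    Nplus A S ∩ kv m a β i = kv m a β i :=
  Finset.inter_eq_right.2 (kv_subset_nplus h)

/-- reinfection: if layer m is hot, every clique is fully in the out-neighborhood. -/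
lemma nplus_inter_kv_hotm {S : Finset X} {i : Fin (3 * m)} (h : (S ∩ lset m a β m).Nonempty) :
    Nplus A S ∩ kv m a β i = kv m a β i :=
  Finset.inter_eq_right.2 (fun y hy => kset_subset_nplus h (kv_subset_kset hy))

end TPD

namespace TPD

variable {m : ℕ} {a : Fin (3 * m) → ℕ} {β : ℕ}

local notation "X" => ((Σ i : Fin (3 * m), Fin (a i)) ⊕ (Fin (m + 1) × Fin β))
local notation "A" => threePartitionDigraph m a β

variable (W : ℕ → Finset ((Σ i : Fin (3 * m), Fin (a i)) ⊕ (Fin (m + 1) × Fin β)))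

/-- clique vertices are in the territory -/
def kc (t : ℕ) : Prop := ((terr A W t) ∩ kset m a β).Nonempty

/-- layer j is hot at time t -/
def hot (j t : ℕ) : Prop := ((terr A W t) ∩ lset m a β j).Nonempty

variable {W}

lemma terr_succ (t : ℕ) : terr A W (t + 1) = Nplus A (terr A W t) \ W (t + 1) := rfl

lemma terr_empty_succ {t : ℕ} (h : terr A W t = ∅) : terr A W (t + 1) = ∅ := by
  rw [terr_succ, h]
  have : Nplus A (∅ : Finset X) = ∅ := by
    rw [Finset.eq_empty_iff_forall_notMem]; intro y hy
    rcases mem_Nplus.1 hy with ⟨x, hx, _⟩; simp at hx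
  simp [this]

lemma terr_empty_mono {t u : ℕ} (h : terr A W t = ∅) (htu : t ≤ u) : terr A W u = ∅ := by
  induction u with
  | zero => cases Nat.le_zero.1 htu; exact h
  | succ n ih =>
      rcases Nat.le_succ_iff.mp htu |>.imp id id with h1 | h1
      · exact terr_empty_succ (ih h1)
      · cases h1; exact h

lemma terr_succ_inter (t : ℕ) (s : Finset X) :
    terr A W (t + 1) ∩ s = (Nplus A (terr A W t) ∩ s) \ W (t + 1) := by
  rw [terr_succ]
  ext x
  simp only [Finset.mem_inter, Finset.mem_sdiff]
  tauto

lemma hot0_succ_iff {t : ℕ} :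
    hot W 0 (t + 1) ↔ kc W t ∧ ¬ lset m a β 0 ⊆ W (t + 1) := by
  unfold hot kc
  rw [terr_succ_inter]
  constructor
  · rintro ⟨y, hy⟩
    rcases Finset.mem_sdiff.1 hy with ⟨hy1, hy2⟩
    rcases Finset.mem_inter.1 hy1 with ⟨hyN, hyL⟩
    constructor
    · by_contra hc
      rw [Finset.not_nonempty_iff_eq_empty] at hc
      have := nplus_inter_lset0 hc (S := terr A W t)
      rw [this] at hy1
      simp at hy1
    · intro hsub
      exact hy2 (hsub hyL)
  · rintro ⟨hkc, hnsub⟩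
    have h0 : Nplus A (terr A W t) ∩ lset m a β 0 = lset m a β 0 :=
      Finset.inter_eq_right.2 (lset0_subset_nplus hkc)
    rw [h0]
    rw [Finset.not_subset] at hnsub
    rcases hnsub with ⟨y, hy1, hy2⟩
    exact ⟨y, Finset.mem_sdiff.2 ⟨hy1, hy2⟩⟩

lemma hot0_zero_iff : hot W 0 0 ↔ ¬ lset m a β 0 ⊆ W 0 := by
  unfold hot
  show ((Finset.univ \ W 0) ∩ lset m a β 0).Nonempty ↔ _
  constructor
  · rintro ⟨y, hy⟩
    rcases Finset.mem_inter.1 hy with ⟨hy1, hy2⟩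
    intro hsub
    exact (Finset.mem_sdiff.1 hy1).2 (hsub hy2)
  · intro hnsub
    rw [Finset.not_subset] at hnsub
    rcases hnsub with ⟨y, hy1, hy2⟩
    exact ⟨y, Finset.mem_inter.2 ⟨Finset.mem_sdiff.2 ⟨Finset.mem_univ y, hy2⟩, hy1⟩⟩

lemma hot_succ_of {j t : ℕ} (h : hot W j t) (hn : ¬ lset m a β (j + 1) ⊆ W (t + 1)) :
    hot W (j + 1) (t + 1) := by
  unfold hot
  rw [terr_succ_inter]
  have h0 : Nplus A (terr A W t) ∩ lset m a β (j + 1) = lset m a β (j + 1) :=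
    Finset.inter_eq_right.2 (lset_succ_subset_nplus h)
  rw [h0]
  rw [Finset.not_subset] at hn
  rcases hn with ⟨y, hy1, hy2⟩
  exact ⟨y, Finset.mem_sdiff.2 ⟨hy1, hy2⟩⟩

lemma hot_succ_source {j t : ℕ} (h : hot W (j + 1) (t + 1)) : hot W j t := by
  unfold hot at *
  by_contra hc
  rw [Finset.not_nonempty_iff_eq_empty] at hc
  rcases h with ⟨y, hy⟩
  rw [terr_succ_inter, nplus_inter_lset_succ hc] at hy
  simp at hy

lemma hot0_succ_source {t : ℕ} (h : hot W 0 (t + 1)) : kc W t := (hot0_succ_iff.1 h).1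

lemma kc_succ_source {t : ℕ} (h : kc W (t + 1)) : kc W t ∨ hot W m t := by
  unfold kc hot at *
  rcases h with ⟨y, hy⟩
  rw [terr_succ_inter] at hy
  rcases Finset.mem_sdiff.1 hy with ⟨hy1, _⟩
  rcases Finset.mem_inter.1 hy1 with ⟨hyN, hyK⟩
  cases y with
  | inr p => simp [mem_kset] at hyK
  | inl u =>
      rcases mem_Nplus.1 hyN with ⟨x, hxS, hA⟩
      cases x with
      | inl v =>
          left
          exact ⟨Sum.inl v, Finset.mem_inter.2 ⟨hxS, by simp [mem_kset]⟩⟩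
      | inr p =>
          right
          rw [arc_inr_inl] at hA
          exact ⟨Sum.inr p, Finset.mem_inter.2 ⟨hxS, mem_lset.2 ⟨p, rfl, hA⟩⟩⟩

lemma reinfect {t : ℕ} (h : hot W m t) (i : Fin (3 * m)) :
    terr A W (t + 1) ∩ kv m a β i = kv m a β i \ W (t + 1) := by
  rw [terr_succ_inter, nplus_inter_kv_hotm h]

lemma not_hot_iff {j t : ℕ} : ¬ hot W j t ↔ terr A W t ∩ lset m a β j = ∅ := by
  unfold hot
  rw [Finset.not_nonempty_iff_eq_empty]

/-- if layer m is hot and m ≥ 2, cliques are reinfected -/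
lemma kc_of_hotm (hW : UsesAtMost W β) (hβq : m * β = ∑ i, a i) (hm2 : 2 ≤ m) (hb : 0 < β)
    {t : ℕ} (h : hot W m t) : kc W (t + 1) := by
  by_contra hc
  unfold kc at hc
  rw [Finset.not_nonempty_iff_eq_empty] at hc
  have hsub : kset m a β ⊆ W (t + 1) := by
    intro y hy
    rcases Finset.mem_biUnion.1 (kset_eq_biUnion ▸ hy) with ⟨i, _, hyi⟩
    by_contra hyW
    have : y ∈ terr A W (t + 1) ∩ kset m a β := by
      refine Finset.mem_inter.2 ⟨?_, hy⟩
      have := reinfect h i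
      have hmem : y ∈ terr A W (t + 1) ∩ kv m a β i := this ▸ Finset.mem_sdiff.2 ⟨hyi, hyW⟩
      exact (Finset.mem_inter.1 hmem).1
    simp [hc] at this
  have hcard := Finset.card_le_card hsub
  rw [card_kset] at hcard
  have := hW (t + 1)
  nlinarith

lemma chain {t : ℕ} (h : hot W 0 t)
    (hn : ∀ j, 1 ≤ j → j ≤ m → ¬ lset m a β j ⊆ W (t + j)) :
    ∀ j, j ≤ m → hot W j (t + j) := by
  intro j
  induction j with
  | zero => intro _; exact h
  | succ n ih =>
      intro hnm
      have hh := ih (by omega)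
      exact hot_succ_of hh (hn (n + 1) (by omega) hnm)

lemma W_eq_lset_of_subset (hW : UsesAtMost W β) {j t : ℕ} (hj : j ≤ m)
    (h : lset m a β j ⊆ W t) : W t = lset m a β j := by
  refine (Finset.eq_of_subset_of_card_le h ?_).symm
  calc (W t).card ≤ β := hW t
    _ = (lset m a β j).card := (card_lset hj).symm

lemma W_inter_kset_of_lset (hW : UsesAtMost W β) {j t : ℕ} (hj : j ≤ m)
    (h : lset m a β j ⊆ W t) : W t ∩ kset m a β = ∅ := by
  rw [W_eq_lset_of_subset hW hj h]
  rw [← Finset.disjoint_iff_inter_eq_empty]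
  exact (kset_lset_disj (j := j)).symm

lemma lset_subset_unique (hW : UsesAtMost W β) (hb : 0 < β) {j j' t : ℕ} (hj : j ≤ m)
    (hj' : j' ≤ m) (h : lset m a β j ⊆ W t) (h' : lset m a β j' ⊆ W t) : j = j' := by
  by_contra hne
  have := W_eq_lset_of_subset hW hj h
  have h2 := this ▸ h'
  have hne2 : (lset m a β j').Nonempty := by
    rw [← Finset.card_pos, card_lset hj']; omega
  rcases hne2 with ⟨y, hy⟩
  have hy2 := h2 hy
  exact (Finset.disjoint_left.1 (lset_disj hne)) hy2 hy

lemma not_kc_of_empty {t : ℕ} (h : terr A W t = ∅) : ¬ kc W t := by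
  unfold kc; rw [h]; simp

lemma not_hot_of_empty {j t : ℕ} (h : terr A W t = ∅) : ¬ hot W j t := by
  unfold hot; rw [h]; simp

end TPD

namespace TPD

variable {m : ℕ} {a : Fin (3 * m) → ℕ} {β : ℕ}

local notation "X" => ((Σ i : Fin (3 * m), Fin (a i)) ⊕ (Fin (m + 1) × Fin β))
local notation "A" => threePartitionDigraph m a β

variable {W : ℕ → Finset ((Σ i : Fin (3 * m), Fin (a i)) ⊕ (Fin (m + 1) × Fin β))}

lemma card_sdiff_inter (s t : Finset ((Σ i : Fin (3 * m), Fin (a i)) ⊕ (Fin (m + 1) × Fin β))) :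
    (s \ t).card = s.card - (s ∩ t).card := by
  rw [← Finset.sdiff_inter_self_left s t, Finset.card_sdiff_of_subset Finset.inter_subset_left]

lemma Icc_sum_split {lo hi : ℕ} (h : lo ≤ hi) (f : ℕ → ℕ) :
    ∑ u ∈ Finset.Icc lo hi, f u = f lo + ∑ u ∈ Finset.Icc (lo + 1) hi, f u := by
  have he : Finset.Icc lo hi = insert lo (Finset.Icc (lo + 1) hi) := by
    ext x; simp only [Finset.mem_Icc, Finset.mem_insert]; omega
  rw [he, Finset.sum_insert (by simp only [Finset.mem_Icc]; omega)]

/-! ### Lower bound -/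

lemma step_nonempty {k t : ℕ} (hW : UsesAtMost W k)
    {s : Finset ((Σ i : Fin (3 * m), Fin (a i)) ⊕ (Fin (m + 1) × Fin β))}
    (hs : s ⊆ Nplus A (terr A W t)) (hk : k < s.card) : terr A W (t + 1) ≠ ∅ := by
  intro hc
  have hsub : s \ W (t + 1) ⊆ terr A W (t + 1) := by
    intro y hy
    rcases Finset.mem_sdiff.1 hy with ⟨h1, h2⟩
    rw [terr_succ]
    exact Finset.mem_sdiff.2 ⟨hs h1, h2⟩
  rw [hc, Finset.subset_empty] at hsub
  have := card_sdiff_inter s (W (t + 1))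
  rw [hsub] at this
  simp only [Finset.card_empty] at this
  have h1 : (s ∩ W (t + 1)).card ≤ (W (t + 1)).card := Finset.card_le_card Finset.inter_subset_right
  have := hW (t + 1)
  omega

lemma lower_bound (hβq : m * β = ∑ i, a i) (hm : 1 ≤ m) (hb : 0 < β)
    {k : ℕ} (hk : k < β) (hW : UsesAtMost W k) : ∀ t, terr A W t ≠ ∅ := by
  intro t
  induction t with
  | zero =>
      intro hc
      have hsub : kset m a β \ W 0 ⊆ terr A W 0 := by
        intro y hy
        rcases Finset.mem_sdiff.1 hy with ⟨_, h2⟩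
        exact Finset.mem_sdiff.2 ⟨Finset.mem_univ y, h2⟩
      rw [hc, Finset.subset_empty] at hsub
      have := card_sdiff_inter (kset m a β) (W 0)
      rw [hsub] at this
      simp only [Finset.card_empty] at this
      have h1 : (kset m a β ∩ W 0).card ≤ (W 0).card := Finset.card_le_card Finset.inter_subset_right
      have h2 := hW 0
      rw [card_kset] at this
      have hS : β ≤ ∑ i, a i := by
        rw [← hβq]
        calc β = 1 * β := (one_mul β).symm
          _ ≤ m * β := Nat.mul_le_mul_right β hm
      omega
  | succ n ih =>
      rcases Finset.nonempty_iff_ne_empty.2 ih with ⟨x, hx⟩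
      cases x with
      | inl u =>
          have hkc : (terr A W n ∩ kset m a β).Nonempty :=
            ⟨Sum.inl u, Finset.mem_inter.2 ⟨hx, by simp [mem_kset]⟩⟩
          refine step_nonempty hW (lset0_subset_nplus hkc) ?_
          rw [card_lset (by omega)]; exact hk
      | inr p =>
          by_cases hpm : (p.1 : ℕ) = m
          · have hhot : (terr A W n ∩ lset m a β m).Nonempty :=
              ⟨Sum.inr p, Finset.mem_inter.2 ⟨hx, mem_lset.2 ⟨p, rfl, hpm⟩⟩⟩
            refine step_nonempty hW (kset_subset_nplus hhot) ?_
            rw [card_kset]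
            have hS : β ≤ ∑ i, a i := by
              rw [← hβq]
              calc β = 1 * β := (one_mul β).symm
                _ ≤ m * β := Nat.mul_le_mul_right β hm
            omega
          · have hple : (p.1 : ℕ) < m := by have := p.1.2; omega
            have hhot : (terr A W n ∩ lset m a β (p.1 : ℕ)).Nonempty :=
              ⟨Sum.inr p, Finset.mem_inter.2 ⟨hx, mem_lset.2 ⟨p, rfl, rfl⟩⟩⟩
            refine step_nonempty hW (lset_succ_subset_nplus hhot) ?_
            rw [card_lset (by omega)]; exact hk

/-! ### clique transitions -/

lemma clique_step_two {t : ℕ} {i : Fin (3 * m)} (h2 : 2 ≤ (terr A W t ∩ kv m a β i).card) :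
    terr A W (t + 1) ∩ kv m a β i = kv m a β i \ W (t + 1) := by
  rw [terr_succ_inter, nplus_inter_kv_two h2]

lemma clique_step_one {t : ℕ} {i : Fin (3 * m)} (hm1 : ¬ hot W m t)
    {z : ((Σ i : Fin (3 * m), Fin (a i)) ⊕ (Fin (m + 1) × Fin β))}
    (h1 : terr A W t ∩ kv m a β i = {z}) :
    terr A W (t + 1) ∩ kv m a β i = (kv m a β i \ {z}) \ W (t + 1) := by
  rw [terr_succ_inter, nplus_inter_kv_singleton (not_hot_iff.1 hm1) h1]

lemma clique_step_zero {t : ℕ} {i : Fin (3 * m)} (hm1 : ¬ hot W m t)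
    (h0 : terr A W t ∩ kv m a β i = ∅) :
    terr A W (t + 1) ∩ kv m a β i = ∅ := by
  rw [terr_succ_inter, nplus_inter_kv_empty (not_hot_iff.1 hm1) h0]
  simp

/-! ### budget lemma -/

/-- the structure extracted in the tight case: a unique time at which the clique is
fully covered, and no cops on the clique at any other time of the window -/
def KillStruct (W : ℕ → Finset ((Σ i : Fin (3 * m), Fin (a i)) ⊕ (Fin (m + 1) × Fin β)))
    (i : Fin (3 * m)) (lo hi : ℕ) : Prop :=
  ∃ u₀ ∈ Finset.Icc lo hi, kv m a β i ⊆ W u₀ ∧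
    ∀ v ∈ Finset.Icc lo hi, v ≠ u₀ → W v ∩ kv m a β i = ∅

lemma budget_core (ha : ∀ i, 2 < a i) {i : Fin (3 * m)} {r e : ℕ}
    (hno : ∀ u, r + 1 ≤ u → u ≤ e → ¬ hot W m u)
    (hdead : terr A W (e + 1) ∩ kv m a β i = ∅) :
    ∀ d t, r + 1 ≤ t → t + d = e + 1 →
      (2 ≤ (terr A W t ∩ kv m a β i).card →
        (a i ≤ ∑ u ∈ Finset.Icc (t + 1) (e + 1), (W u ∩ kv m a β i).card ∧
          ((∑ u ∈ Finset.Icc (t + 1) (e + 1), (W u ∩ kv m a β i).card) ≤ a i →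
            KillStruct W i (t + 1) (e + 1)))) ∧
      ((terr A W t ∩ kv m a β i).card = 1 →
        a i - 1 ≤ ∑ u ∈ Finset.Icc (t + 1) (e + 1), (W u ∩ kv m a β i).card) := by
  intro d
  induction d with
  | zero =>
      intro t ht hte
      have htt : t = e + 1 := by omega
      subst htt
      rw [hdead]
      simp only [Finset.card_empty]
      exact ⟨fun h => by omega, fun h => by omega⟩
  | succ n ih =>
      intro t ht hte
      have hte' : t ≤ e := by omega
      have hnohot : ¬ hot W m t := hno t ht hte'
      have hIH := ih (t + 1) (by omega) (by omega)
      simp only [show t + 1 + 1 = t + 2 from rfl] at hIH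
      have hsplit := Icc_sum_split (show t + 1 ≤ e + 1 by omega)
        (fun u => (W u ∩ kv m a β i).card)
      simp only [show t + 1 + 1 = t + 2 from rfl] at hsplit
      have hai := ha i
      constructor
      · -- state ≥ 2 at t
        intro h2
        have hstep := clique_step_two h2
        have hcardle : (kv m a β i ∩ W (t + 1)).card ≤ a i :=
          le_of_le_of_eq (Finset.card_le_card Finset.inter_subset_left) card_kv
        have hcard : (terr A W (t + 1) ∩ kv m a β i).card
            = a i - (kv m a β i ∩ W (t + 1)).card := by
          rw [hstep, card_sdiff_inter, card_kv]
        have hcomm : (W (t + 1) ∩ kv m a β i).card = (kv m a β i ∩ W (t + 1)).card := by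
          rw [Finset.inter_comm]
        obtain h0 | h1 | hge : (terr A W (t + 1) ∩ kv m a β i).card = 0 ∨
            (terr A W (t + 1) ∩ kv m a β i).card = 1 ∨
            2 ≤ (terr A W (t + 1) ∩ kv m a β i).card := by omega
        · -- full cover at t+1
          have hc : (kv m a β i ∩ W (t + 1)).card = a i := by omega
          have hsub : kv m a β i ⊆ W (t + 1) := by
            have heq : kv m a β i ∩ W (t + 1) = kv m a β i :=
              Finset.eq_of_subset_of_card_le Finset.inter_subset_left (by rw [hc, card_kv])
            exact fun y hy => (Finset.mem_inter.1 (heq ▸ hy)).2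
          constructor
          · rw [hsplit, hcomm, hc]; omega
          · intro htot
            refine ⟨t + 1, Finset.mem_Icc.2 ⟨le_refl _, by omega⟩, hsub, ?_⟩
            intro v hv hvne
            rw [hsplit, hcomm, hc] at htot
            have hzero : ∑ u ∈ Finset.Icc (t + 2) (e + 1), (W u ∩ kv m a β i).card = 0 := by
              omega
            have hv2 : v ∈ Finset.Icc (t + 2) (e + 1) := by
              rcases Finset.mem_Icc.1 hv with ⟨ha1, ha2⟩
              exact Finset.mem_Icc.2 ⟨by omega, ha2⟩
            exact Finset.card_eq_zero.1 (Finset.sum_eq_zero_iff.1 hzero v hv2)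
        · -- singleton at t+1
          have hc : (kv m a β i ∩ W (t + 1)).card = a i - 1 := by omega
          have hB := hIH.2 h1
          constructor
          · rw [hsplit, hcomm, hc]; omega
          · intro htot
            rw [hsplit, hcomm, hc] at htot
            omega
        · -- alive at t+1
          have hA := hIH.1 hge
          constructor
          · rw [hsplit]; omega
          · intro htot
            rw [hsplit] at htot
            have htot2 : ∑ u ∈ Finset.Icc (t + 2) (e + 1), (W u ∩ kv m a β i).card ≤ a i := by
              omega
            rcases hA.2 htot2 with ⟨u₀, hu₀, hsub, hrest⟩
            have hc0 : (W (t + 1) ∩ kv m a β i).card = 0 := by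
              have := hA.1
              omega
            refine ⟨u₀, ?_, hsub, ?_⟩
            · rcases Finset.mem_Icc.1 hu₀ with ⟨ha1, ha2⟩
              exact Finset.mem_Icc.2 ⟨by omega, ha2⟩
            · intro v hv hvne
              rcases Finset.mem_Icc.1 hv with ⟨ha1, ha2⟩
              rcases Nat.eq_or_lt_of_le ha1 with ha3 | ha3
              · rw [← ha3]; exact Finset.card_eq_zero.1 hc0
              · exact hrest v (Finset.mem_Icc.2 ⟨by omega, ha2⟩) hvne
      · -- state = 1 at t
        intro h1
        rcases Finset.card_eq_one.1 h1 with ⟨z, hz⟩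
        have hzmem : z ∈ kv m a β i := by
          have hzz : z ∈ terr A W t ∩ kv m a β i := hz ▸ Finset.mem_singleton_self z
          exact (Finset.mem_inter.1 hzz).2
        have hstep := clique_step_one hnohot hz
        have hcardz : (kv m a β i \ {z}).card = a i - 1 := by
          rw [Finset.card_sdiff_of_subset (Finset.singleton_subset_iff.2 hzmem), card_kv,
            Finset.card_singleton]
        have hcard : (terr A W (t + 1) ∩ kv m a β i).card
            = (a i - 1) - ((kv m a β i \ {z}) ∩ W (t + 1)).card := by
          rw [hstep, card_sdiff_inter, hcardz]
        have hcle : ((kv m a β i \ {z}) ∩ W (t + 1)).card ≤ (W (t + 1) ∩ kv m a β i).card :=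
          Finset.card_le_card (fun y hy => by
            rcases Finset.mem_inter.1 hy with ⟨hy1, hy2⟩
            exact Finset.mem_inter.2 ⟨hy2, (Finset.mem_sdiff.1 hy1).1⟩)
        have hcle2 : ((kv m a β i \ {z}) ∩ W (t + 1)).card ≤ a i - 1 :=
          le_of_le_of_eq (Finset.card_le_card Finset.inter_subset_left) hcardz
        obtain h0 | hone | hge : (terr A W (t + 1) ∩ kv m a β i).card = 0 ∨
            (terr A W (t + 1) ∩ kv m a β i).card = 1 ∨
            2 ≤ (terr A W (t + 1) ∩ kv m a β i).card := by omega
        · rw [hsplit]; omega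
        · have hB := hIH.2 hone
          rw [hsplit]; omega
        · have hA := (hIH.1 hge).1
          rw [hsplit]; omega

lemma budget (ha : ∀ i, 2 < a i) {i : Fin (3 * m)} {r e : ℕ} (hre : r ≤ e)
    (hstart : terr A W (r + 1) ∩ kv m a β i = kv m a β i \ W (r + 1))
    (hno : ∀ u, r + 1 ≤ u → u ≤ e → ¬ hot W m u)
    (hdead : terr A W (e + 1) ∩ kv m a β i = ∅) :
    a i ≤ ∑ u ∈ Finset.Icc (r + 1) (e + 1), (W u ∩ kv m a β i).card ∧
      ((∑ u ∈ Finset.Icc (r + 1) (e + 1), (W u ∩ kv m a β i).card) ≤ a i →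
        KillStruct W i (r + 1) (e + 1)) := by
  have hcore := budget_core ha hno hdead (e - r) (r + 1) (le_refl _) (by omega)
  simp only [show r + 1 + 1 = r + 2 from rfl] at hcore
  have hsplit := Icc_sum_split (show r + 1 ≤ e + 1 by omega)
    (fun u => (W u ∩ kv m a β i).card)
  simp only [show r + 1 + 1 = r + 2 from rfl] at hsplit
  have hai := ha i
  have hcardle : (kv m a β i ∩ W (r + 1)).card ≤ a i :=
    le_of_le_of_eq (Finset.card_le_card Finset.inter_subset_left) card_kv
  have hcard : (terr A W (r + 1) ∩ kv m a β i).card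
      = a i - (kv m a β i ∩ W (r + 1)).card := by
    rw [hstart, card_sdiff_inter, card_kv]
  have hcomm : (W (r + 1) ∩ kv m a β i).card = (kv m a β i ∩ W (r + 1)).card := by
    rw [Finset.inter_comm]
  obtain h0 | h1 | hge : (terr A W (r + 1) ∩ kv m a β i).card = 0 ∨
      (terr A W (r + 1) ∩ kv m a β i).card = 1 ∨
      2 ≤ (terr A W (r + 1) ∩ kv m a β i).card := by omega
  · have hc : (kv m a β i ∩ W (r + 1)).card = a i := by omega
    have hsub : kv m a β i ⊆ W (r + 1) := by
      have heq : kv m a β i ∩ W (r + 1) = kv m a β i :=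
        Finset.eq_of_subset_of_card_le Finset.inter_subset_left (by rw [hc, card_kv])
      exact fun y hy => (Finset.mem_inter.1 (heq ▸ hy)).2
    constructor
    · rw [hsplit, hcomm, hc]; omega
    · intro htot
      refine ⟨r + 1, Finset.mem_Icc.2 ⟨le_refl _, by omega⟩, hsub, ?_⟩
      intro v hv hvne
      rw [hsplit, hcomm, hc] at htot
      have hzero : ∑ u ∈ Finset.Icc (r + 2) (e + 1), (W u ∩ kv m a β i).card = 0 := by
        omega
      have hv2 : v ∈ Finset.Icc (r + 2) (e + 1) := by
        rcases Finset.mem_Icc.1 hv with ⟨ha1, ha2⟩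
        exact Finset.mem_Icc.2 ⟨by omega, ha2⟩
      exact Finset.card_eq_zero.1 (Finset.sum_eq_zero_iff.1 hzero v hv2)
  · have hc : (kv m a β i ∩ W (r + 1)).card = a i - 1 := by omega
    have hB := hcore.2 h1
    constructor
    · rw [hsplit, hcomm, hc]; omega
    · intro htot
      rw [hsplit, hcomm, hc] at htot
      omega
  · have hA := hcore.1 hge
    constructor
    · rw [hsplit]; omega
    · intro htot
      rw [hsplit] at htot
      have htot2 : ∑ u ∈ Finset.Icc (r + 2) (e + 1), (W u ∩ kv m a β i).card ≤ a i := by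
        omega
      rcases hA.2 htot2 with ⟨u₀, hu₀, hsub, hrest⟩
      have hc0 : (W (r + 1) ∩ kv m a β i).card = 0 := by
        have := hA.1
        omega
      refine ⟨u₀, ?_, hsub, ?_⟩
      · rcases Finset.mem_Icc.1 hu₀ with ⟨ha1, ha2⟩
        exact Finset.mem_Icc.2 ⟨by omega, ha2⟩
      · intro v hv hvne
        rcases Finset.mem_Icc.1 hv with ⟨ha1, ha2⟩
        rcases Nat.eq_or_lt_of_le ha1 with ha3 | ha3
        · rw [← ha3]; exact Finset.card_eq_zero.1 hc0
        · exact hrest v (Finset.mem_Icc.2 ⟨by omega, ha2⟩) hvne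

end TPD

namespace TPD

variable {m : ℕ} {a : Fin (3 * m) → ℕ} {β : ℕ}

local notation "X" => ((Σ i : Fin (3 * m), Fin (a i)) ⊕ (Fin (m + 1) × Fin β))
local notation "A" => threePartitionDigraph m a β

variable {W : ℕ → Finset ((Σ i : Fin (3 * m), Fin (a i)) ⊕ (Fin (m + 1) × Fin β))}

lemma unblocked_hotm {t : ℕ} (hb0 : hot W 0 t)
    (hnb : ∀ b, t + 1 ≤ b → b ≤ t + m → ¬ lset m a β (b - t) ⊆ W b) :
    hot W m (t + m) := by
  refine chain hb0 ?_ m (le_refl m)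
  intro j h1 h2
  have := hnb (t + j) (by omega) (by omega)
  rwa [show t + j - t = j by omega] at this

/-- The main counting lemma: at most `m+1` clique-steps in a clean window,
and the saturated case forces an escape wave hitting layer `m` at time `e+1`,
with a forced block at `e+2`. -/
lemma countC (hW : UsesAtMost W β) (hb : 0 < β) (hm1 : 1 ≤ m)
    {r e lo : ℕ} (hlo1 : r + 1 ≤ lo) (hloe : lo ≤ e + 1)
    (hnohot : ∀ t, r + 1 ≤ t → t ≤ e → ¬ hot W m t)
    (hbirth : ∀ t, lo ≤ t → t ≤ e + 1 → hot W 0 t ∨ lset m a β 0 ⊆ W t) :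
    ((Finset.Icc lo (e + 1)).filter (fun t => (W t ∩ kset m a β).Nonempty)).card ≤ m + 1 ∧
    (((Finset.Icc lo (e + 1)).filter (fun t => (W t ∩ kset m a β).Nonempty)).card = m + 1 →
      hot W m (e + 1) ∧ (¬ hot W m (e + 2) → lset m a β m ⊆ W (e + 2))) := by
  classical
  set I : Finset ℕ := Finset.Icc lo (e + 1) with hI
  set Cs : Finset ℕ := I.filter (fun t => (W t ∩ kset m a β).Nonempty) with hCs
  set F0 : Finset ℕ := I.filter (fun t => lset m a β 0 ⊆ W t) with hF0
  set Bk : Finset ℕ := I.filter (fun t => ∃ j, 1 ≤ j ∧ j ≤ m ∧ lset m a β j ⊆ W t) with hBk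
  set births : Finset ℕ := I.filter (fun t => hot W 0 t) with hbirths
  -- step 1 : I ⊆ births ∪ F0
  have hIcover : I ⊆ births ∪ F0 := by
    intro t ht
    rcases Finset.mem_Icc.1 ht with ⟨h1, h2⟩
    rcases hbirth t h1 h2 with h | h
    · exact Finset.mem_union_left _ (Finset.mem_filter.2 ⟨ht, h⟩)
    · exact Finset.mem_union_right _ (Finset.mem_filter.2 ⟨ht, h⟩)
  have hcard1 : I.card ≤ births.card + F0.card :=
    le_trans (Finset.card_le_card hIcover) (Finset.card_union_le _ _)
  -- step 2 : Cs, Bk, F0 pairwise disjoint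
  have hdisjCF : Disjoint Cs F0 := by
    rw [Finset.disjoint_left]
    intro t ht ht'
    have h1 := (Finset.mem_filter.1 ht).2
    have h2 := (Finset.mem_filter.1 ht').2
    have := W_inter_kset_of_lset hW (Nat.zero_le m) h2
    rw [this] at h1
    simp at h1
  have hdisjCB : Disjoint Cs Bk := by
    rw [Finset.disjoint_left]
    intro t ht ht'
    have h1 := (Finset.mem_filter.1 ht).2
    rcases (Finset.mem_filter.1 ht').2 with ⟨j, hj1, hj2, hj3⟩
    have := W_inter_kset_of_lset hW hj2 hj3
    rw [this] at h1
    simp at h1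
  have hdisjBF : Disjoint Bk F0 := by
    rw [Finset.disjoint_left]
    intro t ht ht'
    rcases (Finset.mem_filter.1 ht).2 with ⟨j, hj1, hj2, hj3⟩
    have h2 := (Finset.mem_filter.1 ht').2
    have := lset_subset_unique hW hb hj2 (Nat.zero_le m) hj3 h2
    omega
  have hcard2 : Cs.card + Bk.card + F0.card ≤ I.card := by
    have hu1 : (Cs ∪ Bk ∪ F0).card = Cs.card + Bk.card + F0.card := by
      rw [Finset.card_union_of_disjoint, Finset.card_union_of_disjoint hdisjCB]
      rw [Finset.disjoint_union_left]
      exact ⟨hdisjCF, hdisjBF⟩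
    rw [← hu1]
    apply Finset.card_le_card
    intro t ht
    rcases Finset.mem_union.1 ht with h | h
    · rcases Finset.mem_union.1 h with h | h
      · exact (Finset.mem_filter.1 h).1
      · exact (Finset.mem_filter.1 h).1
    · exact (Finset.mem_filter.1 h).1
  -- step 3 : split births by in-window blocks
  set Pin : ℕ → Prop :=
    fun t => ∃ b, t + 1 ≤ b ∧ b ≤ t + m ∧ b ≤ e + 1 ∧ lset m a β (b - t) ⊆ W b with hPin
  set B1 : Finset ℕ := births.filter Pin with hB1
  set B23 : Finset ℕ := births.filter (fun t => ¬ Pin t) with hB23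
  have hsplitB : B1.card + B23.card = births.card := Finset.card_filter_add_card_filter_not _
  -- step 4 : B1 injects into Bk
  have hB1le : B1.card ≤ Bk.card := by
    have hmaps : ∀ t ∈ B1, ∀ h : Pin t, True := fun _ _ _ => trivial
    set f : ℕ → ℕ := fun t => if h : Pin t then Nat.find h else 0 with hf
    apply Finset.card_le_card_of_injOn f
    · intro t ht
      rcases Finset.mem_filter.1 ht with ⟨htb, htp⟩
      rcases Finset.mem_filter.1 htb with ⟨htI, _⟩
      rcases Finset.mem_Icc.1 htI with ⟨ht1, ht2⟩
      have hfv : f t = Nat.find htp := by rw [hf]; simp [htp]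
      have hspec := Nat.find_spec htp
      rw [← hfv] at hspec
      rcases hspec with ⟨hb1, hb2, hb3, hb4⟩
      refine Finset.mem_filter.2 ⟨Finset.mem_Icc.2 ⟨by omega, hb3⟩, ?_⟩
      exact ⟨f t - t, by omega, by omega, hb4⟩
    · intro t ht t' ht' hft
      rcases Finset.mem_coe.1 ht with ht
      rcases Finset.mem_coe.1 ht' with ht'
      rcases Finset.mem_filter.1 ht with ⟨_, htp⟩
      rcases Finset.mem_filter.1 ht' with ⟨_, htp'⟩
      have hfv : f t = Nat.find htp := by rw [hf]; simp [htp]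
      have hfv' : f t' = Nat.find htp' := by rw [hf]; simp [htp']
      have hspec := Nat.find_spec htp
      have hspec' := Nat.find_spec htp'
      rw [← hfv] at hspec
      rw [← hfv'] at hspec'
      rcases hspec with ⟨hb1, hb2, hb3, hb4⟩
      rcases hspec' with ⟨hc1, hc2, hc3, hc4⟩
      rw [hft] at hb1 hb2 hb4
      have := lset_subset_unique hW hb (show f t' - t ≤ m by omega)
        (show f t' - t' ≤ m by omega) hb4 hc4
      omega
  -- step 5 : B23 is contained in the last m+1 slots
  set Tl : Finset ℕ := I.filter (fun t => e + 1 ≤ t + m) with hTl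
  have hB23sub : B23 ⊆ Tl := by
    intro t ht
    rcases Finset.mem_filter.1 ht with ⟨htb, htp⟩
    rcases Finset.mem_filter.1 htb with ⟨htI, hth⟩
    refine Finset.mem_filter.2 ⟨htI, ?_⟩
    by_contra hc
    push_neg at hc
    have hchain : hot W m (t + m) := by
      apply unblocked_hotm hth
      intro b hb1 hb2 hbs
      exact htp ⟨b, hb1, hb2, by omega, hbs⟩
    rcases Finset.mem_Icc.1 htI with ⟨ht1, _⟩
    exact hnohot (t + m) (by omega) (by omega) hchain
  have hTlcard : Tl.card ≤ m + 1 := by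
    have hsub : Tl ⊆ Finset.Icc (e + 1 - m) (e + 1) := by
      intro t ht
      rcases Finset.mem_filter.1 ht with ⟨htI, hth⟩
      rcases Finset.mem_Icc.1 htI with ⟨h1, h2⟩
      exact Finset.mem_Icc.2 ⟨by omega, h2⟩
    have := Finset.card_le_card hsub
    rw [Nat.card_Icc] at this
    omega
  have hB23Tl : B23.card ≤ Tl.card := Finset.card_le_card hB23sub
  have hB23le : B23.card ≤ m + 1 := le_trans hB23Tl hTlcard
  -- main bound
  have hmain : Cs.card ≤ m + 1 := by omega
  refine ⟨hmain, ?_⟩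
  intro hsat
  -- saturation
  have hB23eq : B23 = Tl := by
    apply Finset.eq_of_subset_of_card_le hB23sub
    omega
  have hTlm : Tl.card = m + 1 := by omega
  have hlom : lo ≤ e + 1 - m := by
    by_contra hc
    push_neg at hc
    have hsub : Tl ⊆ Finset.Icc lo (e + 1) := fun t ht => (Finset.mem_filter.1 ht).1
    have := Finset.card_le_card hsub
    rw [Nat.card_Icc] at this
    omega
  have hme : m ≤ e + 1 := by omega
  have hmemT : ∀ t, e + 1 - m ≤ t → t ≤ e + 1 → t ∈ B23 := by
    intro t h1 h2
    rw [hB23eq]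
    exact Finset.mem_filter.2 ⟨Finset.mem_Icc.2 ⟨by omega, h2⟩, by omega⟩
  -- the wave born at e+1-m is never blocked: hot m (e+1)
  have ht0 : e + 1 - m ∈ B23 := hmemT _ (le_refl _) (by omega)
  rcases Finset.mem_filter.1 ht0 with ⟨ht0b, ht0p⟩
  have ht0hot : hot W 0 (e + 1 - m) := (Finset.mem_filter.1 ht0b).2
  have hhot1 : hot W m (e + 1) := by
    have := unblocked_hotm ht0hot (t := e + 1 - m) ?_
    · rwa [show e + 1 - m + m = e + 1 by omega] at this
    · intro b hb1 hb2 hbs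
      exact ht0p ⟨b, hb1, hb2, by omega, hbs⟩
  refine ⟨hhot1, ?_⟩
  intro hno2
  -- the wave born at e+2-m must be blocked exactly at e+2 by layer m
  have ht1 : e + 2 - m ∈ B23 := hmemT _ (by omega) (by omega)
  rcases Finset.mem_filter.1 ht1 with ⟨ht1b, ht1p⟩
  have ht1hot : hot W 0 (e + 2 - m) := (Finset.mem_filter.1 ht1b).2
  by_contra hc
  have hnoblock : ∀ b, e + 2 - m + 1 ≤ b → b ≤ e + 2 - m + m → ¬ lset m a β (b - (e + 2 - m)) ⊆ W b := by
    intro b hb1 hb2 hbs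
    rcases Nat.lt_or_ge b (e + 2) with hlt | hge
    · exact ht1p ⟨b, hb1, by omega, by omega, hbs⟩
    · have hbeq : b = e + 2 := by omega
      subst hbeq
      rw [show e + 2 - (e + 2 - m) = m by omega] at hbs
      exact hc hbs
  have := unblocked_hotm ht1hot hnoblock
  rw [show e + 2 - m + m = e + 2 by omega] at this
  exact hno2 this

end TPD

namespace TPD

variable {m : ℕ} {a : Fin (3 * m) → ℕ} {β : ℕ}

local notation "X" => ((Σ i : Fin (3 * m), Fin (a i)) ⊕ (Fin (m + 1) × Fin β))
local notation "A" => threePartitionDigraph m a β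

variable {W : ℕ → Finset ((Σ i : Fin (3 * m), Fin (a i)) ⊕ (Fin (m + 1) × Fin β))}

lemma extract_partition (hW : UsesAtMost W β) (ha : ∀ i, 2 < a i) (hβq : m * β = ∑ i, a i)
    (halow : ∀ i, β < 4 * a i) (haup : ∀ i, 2 * a i < β) (hb : 0 < β)
    {r e : ℕ} (hre : r ≤ e)
    (hstart : ∀ i, terr A W (r + 1) ∩ kv m a β i = kv m a β i \ W (r + 1))
    (hnohot : ∀ u, r + 1 ≤ u → u ≤ e → ¬ hot W m u)
    (hdead : ∀ i, terr A W (e + 1) ∩ kv m a β i = ∅)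
    (hCm : ((Finset.Icc (r + 1) (e + 1)).filter
      (fun t => (W t ∩ kset m a β).Nonempty)).card ≤ m) :
    ∃ f : Fin (3 * m) → Fin m,
      (∀ j, (Finset.univ.filter (fun i => f i = j)).card = 3) ∧
      (∀ j, ∑ i ∈ Finset.univ.filter (fun i => f i = j), a i = β) := by
  classical
  set Cs : Finset ℕ := (Finset.Icc (r + 1) (e + 1)).filter
    (fun t => (W t ∩ kset m a β).Nonempty) with hCsdef
  set Tot : Fin (3 * m) → ℕ :=
    fun i => ∑ u ∈ Finset.Icc (r + 1) (e + 1), (W u ∩ kv m a β i).card with hTot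
  have hbud : ∀ i, a i ≤ Tot i ∧ (Tot i ≤ a i → KillStruct W i (r + 1) (e + 1)) :=
    fun i => budget ha hre (hstart i) hnohot (hdead i)
  -- total sums
  have hswap : ∑ i, Tot i = ∑ u ∈ Finset.Icc (r + 1) (e + 1), (W u ∩ kset m a β).card := by
    rw [hTot, Finset.sum_comm]
    exact Finset.sum_congr rfl (fun u _ => (card_inter_kset (W u)).symm)
  have hfilter : ∑ u ∈ Finset.Icc (r + 1) (e + 1), (W u ∩ kset m a β).card
      = ∑ u ∈ Cs, (W u ∩ kset m a β).card := by
    rw [hCsdef]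
    rw [eq_comm]
    apply Finset.sum_filter_of_ne
    intro u _ hne
    exact Finset.card_pos.1 (by omega)
  have hperstep : ∀ u ∈ Cs, (W u ∩ kset m a β).card ≤ β := by
    intro u _
    calc (W u ∩ kset m a β).card ≤ (W u).card := Finset.card_le_card Finset.inter_subset_left
      _ ≤ β := hW u
  have hupper : ∑ u ∈ Cs, (W u ∩ kset m a β).card ≤ Cs.card * β := by
    calc ∑ u ∈ Cs, (W u ∩ kset m a β).card ≤ ∑ u ∈ Cs, β := Finset.sum_le_sum hperstep
      _ = Cs.card * β := by rw [Finset.sum_const, smul_eq_mul]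
  have hlowtot : ∑ i, a i ≤ ∑ i, Tot i := Finset.sum_le_sum (fun i _ => (hbud i).1)
  have hCsβ : Cs.card * β ≤ m * β := Nat.mul_le_mul_right β hCm
  have htoteq : ∑ i, Tot i = ∑ i, a i := by
    have h1 : ∑ i, Tot i ≤ m * β := by
      rw [hswap, hfilter]; omega
    rw [hβq] at h1
    omega
  have hCscard : Cs.card = m := by
    have h1 : m * β ≤ Cs.card * β := by
      rw [hβq, ← htoteq, hswap, hfilter] at *
      omega
    have := Nat.le_of_mul_le_mul_right h1 hb
    omega
  have hsumCs : ∑ u ∈ Cs, (W u ∩ kset m a β).card = m * β := by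
    rw [← hfilter, ← hswap, htoteq, hβq]
  -- each Tot i = a i
  have htots : ∀ i, Tot i = a i := by
    intro i
    by_contra hc
    have hlt : a i < Tot i := lt_of_le_of_ne (hbud i).1 (fun h => hc h.symm)
    have : ∑ i, a i < ∑ i, Tot i :=
      Finset.sum_lt_sum (fun j _ => (hbud j).1) ⟨i, Finset.mem_univ i, hlt⟩
    omega
  have hks : ∀ i, KillStruct W i (r + 1) (e + 1) :=
    fun i => (hbud i).2 (le_of_eq (htots i))
  -- kill steps
  set ks : Fin (3 * m) → ℕ := fun i => Classical.choose (hks i) with hksdef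
  have hksspec : ∀ i, ks i ∈ Finset.Icc (r + 1) (e + 1) ∧ kv m a β i ⊆ W (ks i) ∧
      ∀ v ∈ Finset.Icc (r + 1) (e + 1), v ≠ ks i → W v ∩ kv m a β i = ∅ := by
    intro i
    have h := Classical.choose_spec (hks i)
    rcases h with ⟨h1, h2, h3⟩
    exact ⟨h1, h2, h3⟩
  have hkvne : ∀ i : Fin (3 * m), (kv m a β i).Nonempty := by
    intro i
    rw [← Finset.card_pos, card_kv]
    have := ha i; omega
  have hksCs : ∀ i, ks i ∈ Cs := by
    intro i
    rcases hksspec i with ⟨h1, h2, _⟩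
    refine Finset.mem_filter.2 ⟨h1, ?_⟩
    rcases hkvne i with ⟨y, hy⟩
    exact ⟨y, Finset.mem_inter.2 ⟨h2 hy, kv_subset_kset hy⟩⟩
  -- group sums
  have hgroup : ∀ t ∈ Cs, ∑ i ∈ Finset.univ.filter (fun i => ks i = t), a i
      = (W t ∩ kset m a β).card := by
    intro t htC
    have htI : t ∈ Finset.Icc (r + 1) (e + 1) := (Finset.mem_filter.1 htC).1
    rw [card_inter_kset]
    have hterm : ∀ i : Fin (3 * m), (W t ∩ kv m a β i).card = if ks i = t then a i else 0 := by
      intro i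
      by_cases hit : ks i = t
      · rw [if_pos hit]
        rcases hksspec i with ⟨_, h2, _⟩
        rw [← hit, Finset.inter_eq_right.2 h2, card_kv]
      · rw [if_neg hit]
        rcases hksspec i with ⟨_, _, h3⟩
        rw [h3 t htI (fun h => hit h.symm)]
        simp
    rw [Finset.sum_congr rfl (fun i _ => hterm i), ← Finset.sum_filter]
  -- every step of Cs has full mass β
  have hfull : ∀ t ∈ Cs, (W t ∩ kset m a β).card = β := by
    intro t ht
    by_contra hc
    have hlt : (W t ∩ kset m a β).card < β := lt_of_le_of_ne (hperstep t ht) hc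
    have : ∑ u ∈ Cs, (W u ∩ kset m a β).card < Cs.card * β := by
      calc ∑ u ∈ Cs, (W u ∩ kset m a β).card < ∑ u ∈ Cs, β :=
            Finset.sum_lt_sum hperstep ⟨t, ht, hlt⟩
        _ = Cs.card * β := by rw [Finset.sum_const, smul_eq_mul]
    rw [hsumCs, hCscard] at this
    omega
  -- group cardinalities are 3
  have hgsum : ∀ t ∈ Cs, ∑ i ∈ Finset.univ.filter (fun i => ks i = t), a i = β := by
    intro t ht
    rw [hgroup t ht, hfull t ht]
  have hgcard : ∀ t ∈ Cs, (Finset.univ.filter (fun i : Fin (3 * m) => ks i = t)).card = 3 := by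
    intro t ht
    have hsum := hgsum t ht
    set g := Finset.univ.filter (fun i : Fin (3 * m) => ks i = t) with hg
    have hne : g.Nonempty := by
      rw [← Finset.card_pos]
      by_contra hc
      push_neg at hc
      have h0 : g.card = 0 := by omega
      rw [Finset.card_eq_zero] at h0
      rw [h0, Finset.sum_empty] at hsum
      omega
    by_contra hc
    rcases Nat.lt_or_ge g.card 3 with hlt | hge
    · -- ≤ 2 : sum < β
      have h2 : ∑ i ∈ g, 2 * a i < ∑ i ∈ g, β :=
        Finset.sum_lt_sum_of_nonempty hne (fun i _ => haup i)
      rw [Finset.sum_const, smul_eq_mul, ← Finset.mul_sum, hsum] at h2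
      have hcard2 : g.card ≤ 2 := by omega
      nlinarith
    · -- ≥ 4 : sum > β
      have hge4 : 4 ≤ g.card := by omega
      rcases Finset.exists_subset_card_eq (s := g) (n := 4) hge4 with ⟨s, hs, hscard⟩
      · have hsne : s.Nonempty := by
          rw [← Finset.card_pos]; omega
        have h4 : ∑ i ∈ s, β < ∑ i ∈ s, 4 * a i :=
          Finset.sum_lt_sum_of_nonempty hsne (fun i _ => halow i)
        rw [Finset.sum_const, smul_eq_mul] at h4
        have hsub : ∑ i ∈ s, a i ≤ ∑ i ∈ g, a i := Finset.sum_le_sum_of_subset hs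
        rw [hsum] at hsub
        rw [← Finset.mul_sum] at h4
        have : s.card * β < 4 * β := by
          calc s.card * β < 4 * (∑ i ∈ s, a i) := h4
            _ ≤ 4 * β := by omega
        rw [hscard] at this
        omega
  -- build f via an order isomorphism between Fin m and Cs
  have hiso := Cs.orderIsoOfFin hCscard
  set f : Fin (3 * m) → Fin m := fun i => hiso.symm ⟨ks i, hksCs i⟩ with hf
  refine ⟨f, ?_, ?_⟩
  · intro j
    have : Finset.univ.filter (fun i => f i = j)
        = Finset.univ.filter (fun i : Fin (3 * m) => ks i = (hiso j : ℕ)) := by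
      apply Finset.filter_congr
      intro i _
      rw [hf]
      simp only [OrderIso.symm_apply_eq]
      constructor
      · intro h; rw [← h]
      · intro h; exact Subtype.ext h
    rw [this]
    exact hgcard _ (hiso j).2
  · intro j
    have : Finset.univ.filter (fun i => f i = j)
        = Finset.univ.filter (fun i : Fin (3 * m) => ks i = (hiso j : ℕ)) := by
      apply Finset.filter_congr
      intro i _
      rw [hf]
      simp only [OrderIso.symm_apply_eq]
      constructor
      · intro h; rw [← h]
      · intro h; exact Subtype.ext h
    rw [this]
    exact hgsum _ (hiso j).2

end TPD

namespace TPD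

variable {m : ℕ} {a : Fin (3 * m) → ℕ} {β : ℕ}

local notation "X" => ((Σ i : Fin (3 * m), Fin (a i)) ⊕ (Fin (m + 1) × Fin β))
local notation "A" => threePartitionDigraph m a β

variable {W : ℕ → Finset ((Σ i : Fin (3 * m), Fin (a i)) ⊕ (Fin (m + 1) × Fin β))}

/-- a window analysis: either the window is tight and yields the partition, or
it is saturated and the next window satisfies the invariant again. -/
lemma epoch_rec (hm2 : 2 ≤ m) (hW : UsesAtMost W β) (hβq : m * β = ∑ i, a i)
    (ha : ∀ i, 2 < a i) (halow : ∀ i, β < 4 * a i) (haup : ∀ i, 2 * a i < β) (hb : 0 < β)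
    {T : ℕ} (hT : terr A W T = ∅) :
    ∀ N e r, T ≤ e + N → r + 1 ≤ e → hot W m r →
      (kc W r ∨ W (r + 1) ∩ kset m a β = ∅) →
      (∀ t, r + 1 ≤ t → t ≤ e → kc W t) → ¬ kc W (e + 1) →
      (∀ t, r + 1 ≤ t → t ≤ e → ¬ hot W m t) →
      ∃ f : Fin (3 * m) → Fin m,
        (∀ j, (Finset.univ.filter (fun i => f i = j)).card = 3) ∧
        (∀ j, ∑ i ∈ Finset.univ.filter (fun i => f i = j), a i = β) := by
  intro N
  induction N with
  | zero =>
      intro e r hfuel hre hhotr hδ hkcw hkce hnohot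
      exfalso
      have h1 : kc W e := hkcw e hre (le_refl e)
      have h2 : terr A W e = ∅ := terr_empty_mono hT (by omega)
      rcases h1 with ⟨y, hy⟩
      rw [h2] at hy
      simp at hy
  | succ n ih =>
      intro e r hfuel hre hhotr hδ hkcw hkce hnohot
      have hstart : ∀ i, terr A W (r + 1) ∩ kv m a β i = kv m a β i \ W (r + 1) :=
        reinfect hhotr
      have hdead : ∀ i, terr A W (e + 1) ∩ kv m a β i = ∅ := by
        intro i
        rw [Finset.eq_empty_iff_forall_notMem]
        intro y hy
        rcases Finset.mem_inter.1 hy with ⟨hy1, hy2⟩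
        exact hkce ⟨y, Finset.mem_inter.2 ⟨hy1, kv_subset_kset hy2⟩⟩
      -- choose the birth interval
      obtain ⟨lo, hlo1, hlo2, hbirth, hCeqR⟩ : ∃ lo, r + 1 ≤ lo ∧ lo ≤ e + 1 ∧
          (∀ t, lo ≤ t → t ≤ e + 1 → hot W 0 t ∨ lset m a β 0 ⊆ W t) ∧
          (Finset.Icc (r + 1) (e + 1)).filter (fun t => (W t ∩ kset m a β).Nonempty)
            = (Finset.Icc lo (e + 1)).filter (fun t => (W t ∩ kset m a β).Nonempty) := by
        rcases hδ with hδ1 | hδ2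
        · refine ⟨r + 1, le_refl _, by omega, ?_, rfl⟩
          intro t h1 h2
          by_cases hsub : lset m a β 0 ⊆ W t
          · right; exact hsub
          · left
            obtain ⟨t', rfl⟩ : ∃ t', t = t' + 1 := ⟨t - 1, by omega⟩
            refine hot0_succ_iff.2 ⟨?_, hsub⟩
            rcases Nat.eq_or_lt_of_le h1 with h3 | h3
            · rw [show t' = r by omega]; exact hδ1
            · exact hkcw t' (by omega) (by omega)
        · refine ⟨r + 2, by omega, by omega, ?_, ?_⟩
          · intro t h1 h2
            by_cases hsub : lset m a β 0 ⊆ W t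
            · right; exact hsub
            · left
              obtain ⟨t', rfl⟩ : ∃ t', t = t' + 1 := ⟨t - 1, by omega⟩
              exact hot0_succ_iff.2 ⟨hkcw t' (by omega) (by omega), hsub⟩
          · ext t
            simp only [Finset.mem_filter, Finset.mem_Icc]
            constructor
            · rintro ⟨⟨h1, h2⟩, hP⟩
              rcases Nat.eq_or_lt_of_le h1 with h3 | h3
              · exfalso
                rw [← h3] at hP
                rw [hδ2] at hP
                simp at hP
              · exact ⟨⟨by omega, h2⟩, hP⟩
            · rintro ⟨⟨h1, h2⟩, hP⟩
              exact ⟨⟨by omega, h2⟩, hP⟩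
      have hcount := countC hW hb (by omega) hlo1 hlo2 hnohot hbirth
      rcases Nat.lt_or_ge ((Finset.Icc (r + 1) (e + 1)).filter
          (fun t => (W t ∩ kset m a β).Nonempty)).card (m + 1) with hlt | hge
      · exact extract_partition hW ha hβq halow haup hb (by omega) hstart hnohot hdead
          (by omega)
      · have hCeq : ((Finset.Icc lo (e + 1)).filter
            (fun t => (W t ∩ kset m a β).Nonempty)).card = m + 1 := by
          rw [← hCeqR]
          have := hcount.1
          rw [← hCeqR] at this
          omega
        have hsat := hcount.2 hCeq
        have hhote1 : hot W m (e + 1) := hsat.1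
        have hkce2 : kc W (e + 2) := kc_of_hotm hW hβq hm2 hb hhote1
        have hex : ∃ u, e + 2 ≤ u ∧ ¬ kc W (u + 1) := by
          refine ⟨max (e + 2) T, le_max_left _ _, ?_⟩
          exact not_kc_of_empty (terr_empty_mono hT (by omega))
        set e' := Nat.find hex with he'def
        have he'spec := Nat.find_spec hex
        have he'1 : e + 2 ≤ e' := he'spec.1
        have he'2 : ¬ kc W (e' + 1) := he'spec.2
        have hmin : ∀ u, e + 2 ≤ u → u < e' → kc W (u + 1) := by
          intro u h1 h2
          have := Nat.find_min hex h2
          push_neg at this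
          exact this h1
        have hkcw' : ∀ t, e + 2 ≤ t → t ≤ e' → kc W t := by
          intro t h1 h2
          rcases Nat.eq_or_lt_of_le h1 with h3 | h3
          · rw [← h3]; exact hkce2
          · have := hmin (t - 1) (by omega) (by omega)
            rwa [show t - 1 + 1 = t by omega] at this
        -- last hot-m before e'
        have hnothote' : ¬ hot W m e' := by
          intro hc
          exact he'2 (kc_of_hotm hW hβq hm2 hb hc)
        set r' := Nat.findGreatest (fun u => hot W m u) (e' - 1) with hr'def
        have hr'1 : e + 1 ≤ r' := Nat.le_findGreatest (by omega) hhote1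
        have hr'hot : hot W m r' := Nat.findGreatest_spec (m := e + 1) (by omega) hhote1
        have hr'le : r' ≤ e' - 1 := Nat.findGreatest_le _
        have hr'gr : ∀ k, r' < k → k ≤ e' - 1 → ¬ hot W m k := by
          intro k h1 h2
          exact Nat.findGreatest_is_greatest h1 h2
        have hnohot' : ∀ t, r' + 1 ≤ t → t ≤ e' → ¬ hot W m t := by
          intro t h1 h2
          rcases Nat.eq_or_lt_of_le h2 with h3 | h3
          · rw [h3]; exact hnothote'
          · exact hr'gr t (by omega) (by omega)
        have hkcw'' : ∀ t, r' + 1 ≤ t → t ≤ e' → kc W t := by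
          intro t h1 h2
          exact hkcw' t (by omega) h2
        have hδ' : kc W r' ∨ W (r' + 1) ∩ kset m a β = ∅ := by
          by_cases hkcr' : kc W r'
          · left; exact hkcr'
          · right
            have hr'eq : r' = e + 1 := by
              rcases Nat.eq_or_lt_of_le hr'1 with h3 | h3
              · omega
              · exfalso
                exact hkcr' (hkcw' r' (by omega) (by omega))
            have hnh2 : ¬ hot W m (e + 2) := by
              rcases Nat.eq_or_lt_of_le he'1 with h3 | h3
              · rw [h3]; exact hnothote'
              · exact hr'gr (e + 2) (by omega) (by omega)
            have hblock := hsat.2 hnh2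
            rw [hr'eq]
            rw [show e + 1 + 1 = e + 2 from rfl]
            exact W_inter_kset_of_lset hW (le_refl m) hblock
        exact ih e' r' (by omega) (by omega) hr'hot hδ' hkcw'' he'2 hnohot'

end TPD

namespace TPD

variable {m : ℕ} {a : Fin (3 * m) → ℕ} {β : ℕ}

local notation "X" => ((Σ i : Fin (3 * m), Fin (a i)) ⊕ (Fin (m + 1) × Fin β))
local notation "A" => threePartitionDigraph m a β

variable {W : ℕ → Finset ((Σ i : Fin (3 * m), Fin (a i)) ⊕ (Fin (m + 1) × Fin β))}

lemma lset_nonempty (hb : 0 < β) {j : ℕ} (hj : j ≤ m) : (lset m a β j).Nonempty := by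
  rw [← Finset.card_pos, card_lset hj]
  exact hb

lemma kset_not_subset (hW : UsesAtMost W β) (hβq : m * β = ∑ i, a i) (hm2 : 2 ≤ m)
    (hb : 0 < β) (t : ℕ) : ¬ kset m a β ⊆ W t := by
  intro hsub
  have hcard := Finset.card_le_card hsub
  rw [card_kset] at hcard
  have := hW t
  nlinarith

lemma exists_hotm (hm2 : 2 ≤ m) (hW : UsesAtMost W β) (hβq : m * β = ∑ i, a i)
    (ha : ∀ i, 2 < a i) (hb : 0 < β) {e₀ : ℕ} (hkcall : ∀ t, t ≤ e₀ → kc W t)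
    (hkce : ¬ kc W (e₀ + 1)) : ∃ u, u ≤ e₀ ∧ hot W m u := by
  by_contra hcon
  push_neg at hcon
  have hQ : ∀ u, u ≤ e₀ →
      (kset m a β ⊆ terr A W u ∧ ∀ j, j < m → lset m a β j ⊆ terr A W u) := by
    intro u
    induction u with
    | zero =>
        intro _
        have h0 : ¬ hot W m 0 := hcon 0 (by omega)
        rw [not_hot_iff] at h0
        have hts : terr A W 0 ∩ lset m a β m = lset m a β m \ W 0 := by
          show (Finset.univ \ W 0) ∩ lset m a β m = _
          ext x
          simp only [Finset.mem_inter, Finset.mem_sdiff, Finset.mem_univ, true_and]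
          tauto
        rw [hts] at h0
        have hsubW : lset m a β m ⊆ W 0 := by
          rwa [Finset.sdiff_eq_empty_iff_subset] at h0
        have hW0 : W 0 = lset m a β m := W_eq_lset_of_subset hW (le_refl m) hsubW
        constructor
        · intro y hy
          show y ∈ Finset.univ \ W 0
          rw [hW0]
          exact Finset.mem_sdiff.2 ⟨Finset.mem_univ y,
            fun hc => (Finset.disjoint_left.1 kset_lset_disj) hy hc⟩
        · intro j hj y hy
          show y ∈ Finset.univ \ W 0
          rw [hW0]
          exact Finset.mem_sdiff.2 ⟨Finset.mem_univ y,
            fun hc => (Finset.disjoint_left.1 (lset_disj (show j ≠ m by omega))) hy hc⟩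
    | succ u ihu =>
        intro hu
        have hQu := ihu (by omega)
        have hm1 : (1:ℕ) ≤ m := by omega
        have hhot : (terr A W u ∩ lset m a β (m - 1)).Nonempty := by
          rcases lset_nonempty hb (show m - 1 ≤ m by omega) with ⟨y, hy⟩
          exact ⟨y, Finset.mem_inter.2 ⟨hQu.2 (m - 1) (by omega) hy, hy⟩⟩
        have hsubN : lset m a β m ⊆ Nplus A (terr A W u) := by
          have := lset_succ_subset_nplus hhot
          rwa [show m - 1 + 1 = m by omega] at this
        have h0 : ¬ hot W m (u + 1) := hcon (u + 1) hu
        rw [not_hot_iff, terr_succ_inter, Finset.inter_eq_right.2 hsubN] at h0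
        have hsubW : lset m a β m ⊆ W (u + 1) := Finset.sdiff_eq_empty_iff_subset.1 h0
        have hWu : W (u + 1) = lset m a β m := W_eq_lset_of_subset hW (le_refl m) hsubW
        constructor
        · intro y hy
          rcases Finset.mem_biUnion.1 (kset_eq_biUnion ▸ hy) with ⟨i, _, hyi⟩
          have hkvsub : kv m a β i ⊆ terr A W u := fun z hz => hQu.1 (kv_subset_kset hz)
          have hcard2 : 2 ≤ (terr A W u ∩ kv m a β i).card := by
            rw [Finset.inter_eq_right.2 hkvsub, card_kv]
            have := ha i; omega
          have hyN : y ∈ Nplus A (terr A W u) := kv_subset_nplus hcard2 hyi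
          rw [terr_succ]
          refine Finset.mem_sdiff.2 ⟨hyN, ?_⟩
          rw [hWu]
          exact fun hc => (Finset.disjoint_left.1 kset_lset_disj) hy hc
        · intro j hj y hy
          have hyN : y ∈ Nplus A (terr A W u) := by
            rcases Nat.eq_zero_or_pos j with hj0 | hjpos
            · subst hj0
              have hkcu : kc W u := hkcall u (by omega)
              exact lset0_subset_nplus hkcu hy
            · obtain ⟨j', rfl⟩ : ∃ j', j = j' + 1 := ⟨j - 1, by omega⟩
              have hhot' : (terr A W u ∩ lset m a β j').Nonempty := by
                rcases lset_nonempty hb (show j' ≤ m by omega) with ⟨z, hz⟩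
                exact ⟨z, Finset.mem_inter.2 ⟨hQu.2 j' (by omega) hz, hz⟩⟩
              exact lset_succ_subset_nplus hhot' hy
          rw [terr_succ]
          refine Finset.mem_sdiff.2 ⟨hyN, ?_⟩
          rw [hWu]
          exact fun hc => (Finset.disjoint_left.1 (lset_disj (show j ≠ m by omega))) hy hc
  -- cliques are full at e₀ but all dead at e₀+1 : too many cops needed
  have hQe := hQ e₀ (le_refl _)
  have hksub : kset m a β ⊆ W (e₀ + 1) := by
    intro y hy
    rcases Finset.mem_biUnion.1 (kset_eq_biUnion ▸ hy) with ⟨i, _, hyi⟩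
    by_contra hyW
    apply hkce
    have hkvsub : kv m a β i ⊆ terr A W e₀ := fun z hz => hQe.1 (kv_subset_kset hz)
    have hcard2 : 2 ≤ (terr A W e₀ ∩ kv m a β i).card := by
      rw [Finset.inter_eq_right.2 hkvsub, card_kv]
      have := ha i; omega
    have hstep := clique_step_two hcard2
    have hymem : y ∈ terr A W (e₀ + 1) ∩ kv m a β i :=
      hstep ▸ Finset.mem_sdiff.2 ⟨hyi, hyW⟩
    exact ⟨y, Finset.mem_inter.2 ⟨(Finset.mem_inter.1 hymem).1, hy⟩⟩
  exact kset_not_subset hW hβq hm2 hb (e₀ + 1) hksub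

/-- The forward direction : a winning strategy with β cops yields a 3-partition. -/
lemma forward_direction (hm2 : 2 ≤ m) (hW : UsesAtMost W β) (hβq : m * β = ∑ i, a i)
    (ha : ∀ i, 2 < a i) (halow : ∀ i, β < 4 * a i) (haup : ∀ i, 2 * a i < β)
    {T : ℕ} (hT : terr A W T = ∅) :
    ∃ f : Fin (3 * m) → Fin m,
      (∀ j, (Finset.univ.filter (fun i => f i = j)).card = 3) ∧
      (∀ j, ∑ i ∈ Finset.univ.filter (fun i => f i = j), a i = β) := by
  classical
  have hb : 0 < β := by
    have h1 := haup ⟨0, by omega⟩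
    have h2 := ha ⟨0, by omega⟩
    omega
  -- kc holds at time 0
  have hkc0 : kc W 0 := by
    by_contra hc
    apply kset_not_subset hW hβq hm2 hb 0
    intro y hy
    by_contra hyW
    exact hc ⟨y, Finset.mem_inter.2
      ⟨Finset.mem_sdiff.2 ⟨Finset.mem_univ y, hyW⟩, hy⟩⟩
  -- the first epoch end
  have hexE : ∃ u, ¬ kc W (u + 1) := ⟨T, not_kc_of_empty (terr_empty_succ hT)⟩
  set e₀ := Nat.find hexE with he₀def
  have hkce₀ : ¬ kc W (e₀ + 1) := Nat.find_spec hexE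
  have hminE : ∀ u, u < e₀ → kc W (u + 1) := by
    intro u hu
    have := Nat.find_min hexE hu
    push_neg at this
    exact this
  have hkcall : ∀ t, t ≤ e₀ → kc W t := by
    intro t ht
    rcases Nat.eq_zero_or_pos t with h0 | hpos
    · subst h0; exact hkc0
    · obtain ⟨t', rfl⟩ : ∃ t', t = t' + 1 := ⟨t - 1, by omega⟩
      exact hminE t' (by omega)
  have hnothote₀ : ¬ hot W m e₀ := by
    intro hc
    exact hkce₀ (kc_of_hotm hW hβq hm2 hb hc)
  -- last hot-m before e₀
  rcases exists_hotm hm2 hW hβq ha hb hkcall hkce₀ with ⟨u₀, hu₀1, hu₀2⟩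
  set r₀ := Nat.findGreatest (fun u => hot W m u) e₀ with hr₀def
  have hr₀hot : hot W m r₀ := Nat.findGreatest_spec hu₀1 hu₀2
  have hr₀le : r₀ ≤ e₀ := Nat.findGreatest_le _
  have hr₀lt : r₀ < e₀ := by
    rcases Nat.eq_or_lt_of_le hr₀le with h3 | h3
    · exfalso; rw [h3] at hr₀hot; exact hnothote₀ hr₀hot
    · exact h3
  have hr₀gr : ∀ k, r₀ < k → k ≤ e₀ → ¬ hot W m k := by
    intro k h1 h2
    exact Nat.findGreatest_is_greatest h1 h2
  exact epoch_rec hm2 hW hβq ha halow haup hb hT T e₀ r₀ (by omega) (by omega) hr₀hot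
    (Or.inl (hkcall r₀ (by omega)))
    (fun t h1 h2 => hkcall t h2) hkce₀
    (fun t h1 h2 => hr₀gr t (by omega) h2)

end TPD

namespace TPD

variable {m : ℕ} {a : Fin (3 * m) → ℕ} {β : ℕ}

local notation "X" => ((Σ i : Fin (3 * m), Fin (a i)) ⊕ (Fin (m + 1) × Fin β))
local notation "A" => threePartitionDigraph m a β

/-- the union of the cliques in the `j`-th group -/
noncomputable def grp (m : ℕ) (a : Fin (3 * m) → ℕ) (β : ℕ)
    (f : Fin (3 * m) → Fin m) (j : ℕ) :
    Finset ((Σ i : Fin (3 * m), Fin (a i)) ⊕ (Fin (m + 1) × Fin β)) :=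
  (Finset.univ.filter (fun i => (f i : ℕ) = j)).biUnion (kv m a β)

/-- the winning strategy associated to a 3-partition -/
noncomputable def Wstrat (m : ℕ) (a : Fin (3 * m) → ℕ) (β : ℕ)
    (f : Fin (3 * m) → Fin m) (t : ℕ) :
    Finset ((Σ i : Fin (3 * m), Fin (a i)) ⊕ (Fin (m + 1) × Fin β)) :=
  if t < m then lset m a β 0 else if t < 2 * m then grp m a β f (t - m) else lset m a β m

lemma mem_grp {f : Fin (3 * m) → Fin m} {j : ℕ} {x} :
    x ∈ grp m a β f j ↔ ∃ i, (f i : ℕ) = j ∧ x ∈ kv m a β i := by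
  simp only [grp, Finset.mem_biUnion, Finset.mem_filter, Finset.mem_univ, true_and]

lemma grp_lset_disj {f : Fin (3 * m) → Fin m} {j jj : ℕ} :
    Disjoint (grp m a β f j) (lset m a β jj) := by
  rw [Finset.disjoint_left]
  intro x hx hx'
  rcases mem_grp.1 hx with ⟨i, _, hxi⟩
  rcases mem_kv.1 hxi with ⟨u, rfl⟩
  rcases mem_lset.1 hx' with ⟨p, hp, _⟩
  simp at hp

lemma kv_inter_grp_eq {f : Fin (3 * m) → Fin m} {j : ℕ} {i : Fin (3 * m)}
    (h : (f i : ℕ) = j) : kv m a β i ∩ grp m a β f j = kv m a β i := by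
  refine Finset.inter_eq_left.2 ?_
  intro x hx
  exact mem_grp.2 ⟨i, h, hx⟩

lemma kv_inter_grp_empty {f : Fin (3 * m) → Fin m} {j : ℕ} {i : Fin (3 * m)}
    (h : (f i : ℕ) ≠ j) : kv m a β i ∩ grp m a β f j = ∅ := by
  rw [Finset.eq_empty_iff_forall_notMem]
  intro x hx
  rcases Finset.mem_inter.1 hx with ⟨hx1, hx2⟩
  rcases mem_grp.1 hx2 with ⟨i', hi', hxi'⟩
  rcases eq_or_ne i i' with rfl | hne
  · exact h hi'
  · exact (Finset.disjoint_left.1 (kv_disj hne)) hx1 hxi'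

lemma kv_sdiff_grp_eq {f : Fin (3 * m) → Fin m} {j : ℕ} {i : Fin (3 * m)}
    (h : (f i : ℕ) ≠ j) : kv m a β i \ grp m a β f j = kv m a β i := by
  rw [Finset.sdiff_eq_self_iff_disjoint, Finset.disjoint_iff_inter_eq_empty]
  exact kv_inter_grp_empty h

lemma kv_sdiff_grp_empty {f : Fin (3 * m) → Fin m} {j : ℕ} {i : Fin (3 * m)}
    (h : (f i : ℕ) = j) : kv m a β i \ grp m a β f j = ∅ := by
  rw [Finset.sdiff_eq_empty_iff_subset]
  intro x hx
  exact mem_grp.2 ⟨i, h, hx⟩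

lemma lset_sdiff_grp {f : Fin (3 * m) → Fin m} {j jj : ℕ} :
    lset m a β jj \ grp m a β f j = lset m a β jj := by
  rw [Finset.sdiff_eq_self_iff_disjoint]
  exact grp_lset_disj.symm

lemma lset_sdiff_lset {j j' : ℕ} (h : j ≠ j') :
    lset m a β j \ lset m a β j' = lset m a β j := by
  rw [Finset.sdiff_eq_self_iff_disjoint]
  exact lset_disj h

lemma kv_sdiff_lset {i : Fin (3 * m)} {j : ℕ} :
    kv m a β i \ lset m a β j = kv m a β i := by
  rw [Finset.sdiff_eq_self_iff_disjoint]
  exact Finset.disjoint_of_subset_left kv_subset_kset kset_lset_disj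

lemma empty_of_inters {s : Finset ((Σ i : Fin (3 * m), Fin (a i)) ⊕ (Fin (m + 1) × Fin β))}
    (hk : ∀ i, s ∩ kv m a β i = ∅) (hl : ∀ j, j ≤ m → s ∩ lset m a β j = ∅) : s = ∅ := by
  rw [Finset.eq_empty_iff_forall_notMem]
  intro x hx
  cases hxc : x with
  | inl u =>
      have : x ∈ s ∩ kv m a β u.1 := by
        rw [hxc]
        exact Finset.mem_inter.2 ⟨hxc ▸ hx, mem_kv.2 ⟨u.2, by rfl⟩⟩
      rw [hk u.1] at this
      simp at this
  | inr p =>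
      have hpm : (p.1 : ℕ) ≤ m := by have := p.1.2; omega
      have : x ∈ s ∩ lset m a β (p.1 : ℕ) := by
        rw [hxc]
        exact Finset.mem_inter.2 ⟨hxc ▸ hx, mem_lset.2 ⟨p, rfl, rfl⟩⟩
      rw [hl _ hpm] at this
      simp at this

lemma inter_kset_empty_of {s : Finset ((Σ i : Fin (3 * m), Fin (a i)) ⊕ (Fin (m + 1) × Fin β))}
    (hk : ∀ i, s ∩ kv m a β i = ∅) : s ∩ kset m a β = ∅ := by
  rw [Finset.eq_empty_iff_forall_notMem]
  intro x hx
  rcases Finset.mem_inter.1 hx with ⟨hx1, hx2⟩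
  rcases Finset.mem_biUnion.1 (kset_eq_biUnion ▸ hx2) with ⟨i, _, hxi⟩
  have : x ∈ s ∩ kv m a β i := Finset.mem_inter.2 ⟨hx1, hxi⟩
  rw [hk i] at this
  simp at this

lemma card_grp {f : Fin (3 * m) → Fin m}
    (hsum : ∀ j : Fin m, ∑ i ∈ Finset.univ.filter (fun i => f i = j), a i = β)
    {j : ℕ} (hj : j < m) : (grp m a β f j).card = β := by
  rw [grp, Finset.card_biUnion]
  · have hfib : Finset.univ.filter (fun i => (f i : ℕ) = j)
        = Finset.univ.filter (fun i => f i = ⟨j, hj⟩) := by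
      apply Finset.filter_congr
      intro i _
      constructor
      · intro h; exact Fin.ext h
      · intro h; rw [h]
    rw [hfib]
    rw [Finset.sum_congr rfl (fun i _ => (card_kv (i := i)))]
    exact hsum ⟨j, hj⟩
  · intro i _ i' _ hne
    exact kv_disj hne

lemma Wstrat_uses (f : Fin (3 * m) → Fin m)
    (hsum : ∀ j : Fin m, ∑ i ∈ Finset.univ.filter (fun i => f i = j), a i = β)
    (hm : 1 ≤ m) : UsesAtMost (Wstrat m a β f) β := by
  intro t
  unfold Wstrat
  split_ifs with h1 h2
  · rw [card_lset (by omega)]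
  · rw [card_grp hsum (by omega)]
  · rw [card_lset (le_refl m)]

end TPD

namespace TPD

variable {m : ℕ} {a : Fin (3 * m) → ℕ} {β : ℕ}

local notation "X" => ((Σ i : Fin (3 * m), Fin (a i)) ⊕ (Fin (m + 1) × Fin β))
local notation "A" => threePartitionDigraph m a β

lemma terr_zero {W : ℕ → Finset ((Σ i : Fin (3 * m), Fin (a i)) ⊕ (Fin (m + 1) × Fin β))} :
    terr A W 0 = Finset.univ \ W 0 := rfl

lemma terr_zero_inter {W : ℕ → Finset ((Σ i : Fin (3 * m), Fin (a i)) ⊕ (Fin (m + 1) × Fin β))}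
    (s : Finset ((Σ i : Fin (3 * m), Fin (a i)) ⊕ (Fin (m + 1) × Fin β))) :
    terr A W 0 ∩ s = s \ W 0 := by
  rw [terr_zero]
  ext x
  simp only [Finset.mem_inter, Finset.mem_sdiff, Finset.mem_univ, true_and]
  tauto

lemma kv_nonempty (ha : ∀ i, 2 < a i) (i : Fin (3 * m)) : (kv m a β i).Nonempty := by
  rw [← Finset.card_pos, card_kv]
  have := ha i; omega

variable {f : Fin (3 * m) → Fin m}

lemma Wstrat_lo {t : ℕ} (h : t < m) : Wstrat m a β f t = lset m a β 0 := if_pos h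

lemma Wstrat_mid {t : ℕ} (h1 : m ≤ t) (h2 : t < 2 * m) :
    Wstrat m a β f t = grp m a β f (t - m) := by
  unfold Wstrat
  rw [if_neg (by omega), if_pos h2]

lemma Wstrat_hi {t : ℕ} (h : 2 * m ≤ t) : Wstrat m a β f t = lset m a β m := by
  unfold Wstrat
  rw [if_neg (by omega), if_neg (by omega)]

lemma phaseA (hm : 1 ≤ m) (hb : 0 < β) (ha : ∀ i, 2 < a i) :
    ∀ t, t ≤ m - 1 →
      (∀ i, terr A (Wstrat m a β f) t ∩ kv m a β i = kv m a β i) ∧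
      (∀ j, j ≤ m → terr A (Wstrat m a β f) t ∩ lset m a β j
        = if t < j then lset m a β j else ∅) := by
  intro t
  induction t with
  | zero =>
      intro _
      constructor
      · intro i
        rw [terr_zero_inter, Wstrat_lo hm, kv_sdiff_lset]
      · intro j hj
        rw [terr_zero_inter, Wstrat_lo hm]
        rcases Nat.eq_zero_or_pos j with h0 | hpos
        · subst h0
          rw [if_neg (by omega), Finset.sdiff_self]
        · rw [if_pos hpos, lset_sdiff_lset (by omega)]
  | succ t iht =>
      intro ht
      have hIH := iht (by omega)
      have hWt : Wstrat m a β f (t + 1) = lset m a β 0 := Wstrat_lo (by omega)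
      have hkc : (terr A (Wstrat m a β f) t ∩ kset m a β).Nonempty := by
        rcases kv_nonempty ha ⟨0, by omega⟩ with ⟨y, hy⟩
        refine ⟨y, ?_⟩
        have := hIH.1 ⟨0, by omega⟩
        exact Finset.mem_inter.2 ⟨by rw [← this] at hy; exact (Finset.mem_inter.1 hy).1,
          kv_subset_kset hy⟩
      constructor
      · intro i
        have h2 : 2 ≤ (terr A (Wstrat m a β f) t ∩ kv m a β i).card := by
          rw [hIH.1 i, card_kv]
          have := ha i; omega
        rw [terr_succ_inter, nplus_inter_kv_two h2, hWt, kv_sdiff_lset]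
      · intro j hj
        rcases Nat.eq_zero_or_pos j with h0 | hpos
        · subst h0
          rw [terr_succ_inter, hWt,
            Finset.inter_eq_right.2 (lset0_subset_nplus hkc), Finset.sdiff_self,
            if_neg (by omega)]
        · obtain ⟨jj, rfl⟩ : ∃ jj, j = jj + 1 := ⟨j - 1, by omega⟩
          rw [terr_succ_inter, hWt]
          rcases Nat.lt_or_ge t jj with hcase | hcase
          · have hjj : terr A (Wstrat m a β f) t ∩ lset m a β jj = lset m a β jj := by
              rw [hIH.2 jj (by omega), if_pos hcase]
            have hne : (terr A (Wstrat m a β f) t ∩ lset m a β jj).Nonempty := by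
              rw [hjj]; exact lset_nonempty hb (by omega)
            rw [Finset.inter_eq_right.2 (lset_succ_subset_nplus hne),
              lset_sdiff_lset (by omega), if_pos (by omega)]
          · have hjj : terr A (Wstrat m a β f) t ∩ lset m a β jj = ∅ := by
              rw [hIH.2 jj (by omega), if_neg (by omega)]
            rw [nplus_inter_lset_succ hjj, Finset.empty_sdiff, if_neg (by omega)]

lemma phaseB (hm : 1 ≤ m) (hb : 0 < β) (ha : ∀ i, 2 < a i)
    (hfibne : ∀ jm : ℕ, jm < m → ∃ i, (f i : ℕ) = jm) :
    ∀ j, j ≤ m - 1 →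
      (∀ i, terr A (Wstrat m a β f) (m + j) ∩ kv m a β i
        = if j < (f i : ℕ) then kv m a β i else ∅) ∧
      (∀ jj, jj ≤ m → terr A (Wstrat m a β f) (m + j) ∩ lset m a β jj
        = if jj ≤ j then lset m a β jj else ∅) := by
  intro j
  induction j with
  | zero =>
      intro _
      have hA := phaseA (f := f) hm hb ha (m - 1) (le_refl _)
      have hmeq : m + 0 = (m - 1) + 1 := by omega
      have hW : Wstrat m a β f ((m - 1) + 1) = grp m a β f 0 := by
        rw [Wstrat_mid (by omega) (by omega), show m - 1 + 1 - m = 0 by omega]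
      have hhotm : (terr A (Wstrat m a β f) (m - 1) ∩ lset m a β m).Nonempty := by
        rw [hA.2 m (le_refl m), if_pos (by omega)]
        exact lset_nonempty hb (le_refl m)
      have hkc : (terr A (Wstrat m a β f) (m - 1) ∩ kset m a β).Nonempty := by
        rcases kv_nonempty ha ⟨0, by omega⟩ with ⟨y, hy⟩
        refine ⟨y, ?_⟩
        have := hA.1 ⟨0, by omega⟩
        exact Finset.mem_inter.2 ⟨by rw [← this] at hy; exact (Finset.mem_inter.1 hy).1,
          kv_subset_kset hy⟩
      constructor
      · intro i
        rw [hmeq, terr_succ_inter, nplus_inter_kv_hotm hhotm, hW]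
        rcases Nat.eq_zero_or_pos (f i : ℕ) with h0 | hpos
        · rw [kv_sdiff_grp_empty h0, if_neg (by omega)]
        · rw [kv_sdiff_grp_eq (by omega), if_pos hpos]
      · intro jj hjj
        rcases Nat.eq_zero_or_pos jj with h0 | hpos
        · subst h0
          rw [hmeq, terr_succ_inter, Finset.inter_eq_right.2 (lset0_subset_nplus hkc), hW,
            lset_sdiff_grp, if_pos (le_refl 0)]
        · obtain ⟨jj', rfl⟩ : ∃ jj', jj = jj' + 1 := ⟨jj - 1, by omega⟩
          have hjj' : terr A (Wstrat m a β f) (m - 1) ∩ lset m a β jj' = ∅ := by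
            rw [hA.2 jj' (by omega), if_neg (by omega)]
          rw [hmeq, terr_succ_inter, nplus_inter_lset_succ hjj', Finset.empty_sdiff,
            if_neg (by omega)]
  | succ j ihj =>
      intro hj
      have hIH := ihj (by omega)
      have hmeq : m + (j + 1) = (m + j) + 1 := by omega
      have hW : Wstrat m a β f ((m + j) + 1) = grp m a β f (j + 1) := by
        rw [Wstrat_mid (by omega) (by omega), show m + j + 1 - m = j + 1 by omega]
      have hnom : terr A (Wstrat m a β f) (m + j) ∩ lset m a β m = ∅ := by
        rw [hIH.2 m (le_refl m), if_neg (by omega)]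
      have hkc : (terr A (Wstrat m a β f) (m + j) ∩ kset m a β).Nonempty := by
        rcases hfibne (m - 1) (by omega) with ⟨i₁, hi₁⟩
        rcases kv_nonempty ha i₁ with ⟨y, hy⟩
        refine ⟨y, ?_⟩
        have h1 : terr A (Wstrat m a β f) (m + j) ∩ kv m a β i₁ = kv m a β i₁ := by
          rw [hIH.1 i₁, if_pos (by omega)]
        exact Finset.mem_inter.2 ⟨by rw [← h1] at hy; exact (Finset.mem_inter.1 hy).1,
          kv_subset_kset hy⟩
      constructor
      · intro i
        rcases Nat.lt_or_ge j (f i : ℕ) with hcase | hcase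
        · have h2 : 2 ≤ (terr A (Wstrat m a β f) (m + j) ∩ kv m a β i).card := by
            rw [hIH.1 i, if_pos hcase, card_kv]
            have := ha i; omega
          rw [hmeq, terr_succ_inter, nplus_inter_kv_two h2, hW]
          rcases eq_or_ne (f i : ℕ) (j + 1) with heq | hne
          · rw [kv_sdiff_grp_empty heq, if_neg (by omega)]
          · rw [kv_sdiff_grp_eq hne, if_pos (by omega)]
        · have h0 : terr A (Wstrat m a β f) (m + j) ∩ kv m a β i = ∅ := by
            rw [hIH.1 i, if_neg (by omega)]
          rw [hmeq, terr_succ_inter, nplus_inter_kv_empty hnom h0, Finset.empty_sdiff,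
            if_neg (by omega)]
      · intro jj hjj
        rcases Nat.eq_zero_or_pos jj with h0 | hpos
        · subst h0
          rw [hmeq, terr_succ_inter, Finset.inter_eq_right.2 (lset0_subset_nplus hkc), hW,
            lset_sdiff_grp, if_pos (by omega)]
        · obtain ⟨jj', rfl⟩ : ∃ jj', jj = jj' + 1 := ⟨jj - 1, by omega⟩
          rw [hmeq, terr_succ_inter, hW]
          rcases Nat.lt_or_ge j jj' with hcase | hcase
          · have hjj' : terr A (Wstrat m a β f) (m + j) ∩ lset m a β jj' = ∅ := by
              rw [hIH.2 jj' (by omega), if_neg (by omega)]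
            rw [nplus_inter_lset_succ hjj', Finset.empty_sdiff, if_neg (by omega)]
          · have hne : (terr A (Wstrat m a β f) (m + j) ∩ lset m a β jj').Nonempty := by
              rw [hIH.2 jj' (by omega), if_pos (by omega)]
              exact lset_nonempty hb (by omega)
            rw [Finset.inter_eq_right.2 (lset_succ_subset_nplus hne), lset_sdiff_grp,
              if_pos (by omega)]

lemma phaseC (hm : 1 ≤ m) (hb : 0 < β) (ha : ∀ i, 2 < a i)
    (hfibne : ∀ jm : ℕ, jm < m → ∃ i, (f i : ℕ) = jm) :
    ∀ u, 1 ≤ u → u ≤ m →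
      (∀ i, terr A (Wstrat m a β f) (2 * m - 1 + u) ∩ kv m a β i = ∅) ∧
      (∀ jj, jj ≤ m → terr A (Wstrat m a β f) (2 * m - 1 + u) ∩ lset m a β jj
        = if u ≤ jj ∧ jj + 1 ≤ m then lset m a β jj else ∅) := by
  intro u
  induction u with
  | zero => intro h; omega
  | succ u ihu =>
      intro _ hu
      rcases Nat.eq_zero_or_pos u with h0 | hpos
      · -- base case u+1 = 1 : time 2m
        subst h0
        have hB := phaseB (f := f) hm hb ha hfibne (m - 1) (le_refl _)
        have hmeq : 2 * m - 1 + 1 = (m + (m - 1)) + 1 := by omega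
        have hW : Wstrat m a β f ((m + (m - 1)) + 1) = lset m a β m :=
          Wstrat_hi (by omega)
        have hkall : ∀ i, terr A (Wstrat m a β f) (m + (m - 1)) ∩ kv m a β i = ∅ := by
          intro i
          rw [hB.1 i, if_neg (by have := (f i).2; omega)]
        have hnom : terr A (Wstrat m a β f) (m + (m - 1)) ∩ lset m a β m = ∅ := by
          rw [hB.2 m (le_refl m), if_neg (by omega)]
        have hks : terr A (Wstrat m a β f) (m + (m - 1)) ∩ kset m a β = ∅ :=
          inter_kset_empty_of hkall
        constructor
        · intro i
          rw [hmeq, terr_succ_inter, nplus_inter_kv_empty hnom (hkall i),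
            Finset.empty_sdiff]
        · intro jj hjj
          rcases Nat.eq_zero_or_pos jj with hz | hposj
          · subst hz
            rw [hmeq, terr_succ_inter, nplus_inter_lset0 hks, Finset.empty_sdiff,
              if_neg (by omega)]
          · obtain ⟨jj', rfl⟩ : ∃ jj', jj = jj' + 1 := ⟨jj - 1, by omega⟩
            rw [hmeq, terr_succ_inter, hW]
            have hne : (terr A (Wstrat m a β f) (m + (m - 1)) ∩ lset m a β jj').Nonempty := by
              rw [hB.2 jj' (by omega), if_pos (by omega)]
              exact lset_nonempty hb (by omega)
            rw [Finset.inter_eq_right.2 (lset_succ_subset_nplus hne)]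
            rcases eq_or_ne (jj' + 1) m with heq | hnem
            · rw [heq, Finset.sdiff_self, if_neg (by omega)]
            · rw [lset_sdiff_lset hnem, if_pos (by omega)]
      · -- step
        have hIH := ihu hpos (by omega)
        have hmeq : 2 * m - 1 + (u + 1) = (2 * m - 1 + u) + 1 := by omega
        have hW : Wstrat m a β f ((2 * m - 1 + u) + 1) = lset m a β m :=
          Wstrat_hi (by omega)
        have hnom : terr A (Wstrat m a β f) (2 * m - 1 + u) ∩ lset m a β m = ∅ := by
          rw [hIH.2 m (le_refl m), if_neg (by omega)]
        have hks : terr A (Wstrat m a β f) (2 * m - 1 + u) ∩ kset m a β = ∅ :=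
          inter_kset_empty_of hIH.1
        constructor
        · intro i
          rw [hmeq, terr_succ_inter, nplus_inter_kv_empty hnom (hIH.1 i),
            Finset.empty_sdiff]
        · intro jj hjj
          rcases Nat.eq_zero_or_pos jj with hz | hposj
          · subst hz
            rw [hmeq, terr_succ_inter, nplus_inter_lset0 hks, Finset.empty_sdiff,
              if_neg (by omega)]
          · obtain ⟨jj', rfl⟩ : ∃ jj', jj = jj' + 1 := ⟨jj - 1, by omega⟩
            rw [hmeq, terr_succ_inter, hW]
            rcases Nat.lt_or_ge jj' (u) with hcase | hcase
            · have hjj' : terr A (Wstrat m a β f) (2 * m - 1 + u) ∩ lset m a β jj' = ∅ := by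
                rw [hIH.2 jj' (by omega), if_neg (by omega)]
              rw [nplus_inter_lset_succ hjj', Finset.empty_sdiff, if_neg (by omega)]
            · rcases Nat.lt_or_ge (jj' + 1) m with hlt | hge
              · have hne : (terr A (Wstrat m a β f) (2 * m - 1 + u)
                    ∩ lset m a β jj').Nonempty := by
                  rw [hIH.2 jj' (by omega), if_pos (by constructor <;> omega)]
                  exact lset_nonempty hb (by omega)
                rw [Finset.inter_eq_right.2 (lset_succ_subset_nplus hne),
                  lset_sdiff_lset (by omega), if_pos (by constructor <;> omega)]
              · -- jj'+1 ≥ m : either jj' = m-1 (killed by W) or jj' ≥ m (empty)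
                rcases Nat.lt_or_ge jj' m with hlt2 | hge2
                · have hne : (terr A (Wstrat m a β f) (2 * m - 1 + u)
                      ∩ lset m a β jj').Nonempty := by
                    rw [hIH.2 jj' (by omega), if_pos (by constructor <;> omega)]
                    exact lset_nonempty hb (by omega)
                  have hjm : jj' + 1 = m := by omega
                  rw [Finset.inter_eq_right.2 (lset_succ_subset_nplus hne), hjm,
                    Finset.sdiff_self, if_neg (by omega)]
                · omega

/-- the partition strategy wins -/
lemma upper_bound (hm : 1 ≤ m) (hb : 0 < β) (ha : ∀ i, 2 < a i)
    (hfibne : ∀ jm : ℕ, jm < m → ∃ i, (f i : ℕ) = jm) :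
    terr A (Wstrat m a β f) (2 * m - 1 + m) = ∅ := by
  have hC := phaseC (f := f) hm hb ha hfibne m hm (le_refl m)
  apply empty_of_inters hC.1
  intro j hj
  rw [hC.2 j hj, if_neg (by omega)]

end TPD


/-- `cn(D) = β` iff the 3-partition instance is a yes-instance. -/
theorem copNumber_threePartitionDigraph (m : ℕ) (hm : 1 ≤ m)
    (a : Fin (3 * m) → ℕ) (β : ℕ)
    (hβ : m * β = ∑ i, a i)
    (ha : ∀ i, 2 < a i)
    (halow : ∀ i, β < 4 * a i) (haup : ∀ i, 2 * a i < β) :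
    copNumber (threePartitionDigraph m a β) = β ↔
      ∃ f : Fin (3 * m) → Fin m,
        (∀ j, (Finset.univ.filter (fun i => f i = j)).card = 3) ∧
        (∀ j, ∑ i ∈ Finset.univ.filter (fun i => f i = j), a i = β) := by
  classical
  have h3m : 0 < 3 * m := by omega
  have hb : 0 < β := by
    have h1 := haup ⟨0, h3m⟩
    have h2 := ha ⟨0, h3m⟩
    omega
  set S := {k | ∃ W : ℕ → Finset ((Σ i : Fin (3 * m), Fin (a i)) ⊕ (Fin (m + 1) × Fin β)),
    UsesAtMost W k ∧ ∃ t, terr (threePartitionDigraph m a β) W t = ∅} with hS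
  have hcop : copNumber (threePartitionDigraph m a β) = sInf S := rfl
  have hSne : S.Nonempty := by
    refine ⟨Fintype.card ((Σ i : Fin (3 * m), Fin (a i)) ⊕ (Fin (m + 1) × Fin β)),
      fun _ => Finset.univ, fun i => Finset.card_le_univ _, 0, ?_⟩
    show Finset.univ \ Finset.univ = ∅
    exact Finset.sdiff_self _
  have hlow : ∀ k ∈ S, β ≤ k := by
    rintro k ⟨W, hW, t, ht⟩
    by_contra hc
    push_neg at hc
    exact TPD.lower_bound hβ hm hb hc hW t ht
  constructor
  · intro hcopβ
    have hmem : β ∈ S := by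
      rw [hcop] at hcopβ
      rw [← hcopβ]
      exact Nat.sInf_mem hSne
    rcases hmem with ⟨W, hW, t, ht⟩
    rcases Nat.lt_or_ge m 2 with hm1 | hm2
    · -- m = 1 : the partition is trivial
      have hmeq : m = 1 := by omega
      subst hmeq
      refine ⟨fun _ => 0, ?_, ?_⟩
      · intro j
        have hfil : (Finset.univ.filter (fun i : Fin (3 * 1) => (0 : Fin 1) = j))
            = Finset.univ := by
          ext i
          simp [Subsingleton.elim (0 : Fin 1) j]
        rw [hfil, Finset.card_univ]
        simp
      · intro j
        have hfil : (Finset.univ.filter (fun i : Fin (3 * 1) => (0 : Fin 1) = j))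
            = Finset.univ := by
          ext i
          simp [Subsingleton.elim (0 : Fin 1) j]
        rw [hfil]
        omega
    · exact TPD.forward_direction hm2 hW hβ ha halow haup ht
  · rintro ⟨f, hfib, hsum⟩
    have hfibne : ∀ jm : ℕ, jm < m → ∃ i, (f i : ℕ) = jm := by
      intro jm hjm
      have hcard := hfib ⟨jm, hjm⟩
      have hne : (Finset.univ.filter (fun i => f i = ⟨jm, hjm⟩)).Nonempty := by
        rw [← Finset.card_pos, hcard]; omega
      rcases hne with ⟨i, hi⟩
      exact ⟨i, by rw [(Finset.mem_filter.1 hi).2]⟩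
    have hmem : β ∈ S := by
      refine ⟨TPD.Wstrat m a β f, TPD.Wstrat_uses f hsum hm, 2 * m - 1 + m, ?_⟩
      exact TPD.upper_bound hm hb ha hfibne
    rw [hcop]
    have h1 : sInf S ≤ β := Nat.sInf_le hmem
    have h2 : β ≤ sInf S := le_csInf hSne hlow
    omega
end

section
/- Let a_1, ..., a_n be positive integers with n = 3m for an integer m ≥ 1, let β = (a_1 + ... + a_n)/m (assumed to be an integer), and assume a_i > 2 and β/4 < a_i < β/2 for all i. Let D be the digraph whose vertex set is the disjoint union of sets V_1, ..., V_n with |V_i| = a_i and a set Z with |Z| = β, whose arc set consists of: both arcs (u,v) and (v,u) for every two distinct vertices u, v in the same V_i; both arcs (u,v) and (v,u) for every two distinct vertices u, v of Z; and a loop at every vertex. Then cn(D, m+1) = β if and only if there exists a partition of {1, ..., n} into m triples such that the sum of the a_i over each triple equals β. -/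
/-!
The digraph is a disjoint union of looped cliques with no arcs between them. The robber's
territory meets a clique as long as the cops have never occupied the whole clique in a single
round, so a strategy capturing by round `l` amounts to assigning every clique a round in which
it is fully occupied, with at most `k` vertices per round. With `β` cops and `m + 1` rounds the
cliques have total size `(m + 1) β`, so every round is full: `Z` fills a round alone and the
`V_i` fill the other `m` rounds exactly, three per round since `β/4 < a_i < β/2`.
-/

open scoped Classical

/-- `cn(D, l)`: the least `k` admitting a strategy using `k` cops that captures the
robber no later than (1-indexed) time step `l`, i.e. `terr` is empty at some
0-indexed time `t < l`. -/
noncomputable def copNumberBy {V : Type} [Fintype V] [DecidableEq V]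
    (A : V → V → Prop) (l : ℕ) : ℕ :=
  sInf {k | ∃ W : ℕ → Finset V, UsesAtMost W k ∧ ∃ t < l, terr A W t = ∅}

/-- The digraph of the 3-partition reduction for bounded capture time.  Vertices:
the disjoint union of the cliques `V_i` (of size `a i`, `i : Fin (3*m)`) and of a
clique `Z` of size `β`.  Arcs: both directions between distinct vertices inside
each `V_i`; both directions between distinct vertices of `Z`; and a loop at every
vertex. -/
def threePartitionTimedDigraph (m : ℕ) (a : Fin (3 * m) → ℕ) (β : ℕ) :
    ((Σ i : Fin (3 * m), Fin (a i)) ⊕ Fin β) →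
    ((Σ i : Fin (3 * m), Fin (a i)) ⊕ Fin β) → Prop
  | Sum.inl u, Sum.inl w => u.1 = w.1
  | Sum.inr _, Sum.inr _ => True
  | _, _ => False

open Finset

section LabelGraph

/- `fun u v => κ u = κ v` is the disjoint union of the looped complete digraphs on the fibres
of `κ`. -/

variable {V : Type} [Fintype V] {ι : Type*} [DecidableEq ι] (κ : V → ι)

theorem card_filter_comp_eq_sum_card_filter {α : Type*} [DecidableEq α] [Fintype ι] (s : ι → α)
    (j : α) :
    #({v | s (κ v) = j} : Finset V) = ∑ c with s c = j, #({v | κ v = c} : Finset V) := by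
  rw [card_eq_sum_card_fiberwise (f := κ) (t := {c | s c = j}) fun v hv => by simpa using hv]
  refine sum_congr rfl fun c hc => congrArg card ?_
  ext v
  simp only [mem_filter, mem_univ, true_and] at hc ⊢
  constructor
  · exact And.right
  · rintro rfl; exact ⟨hc, rfl⟩

variable [DecidableEq V]

theorem exists_mem_terr_label_iff (W : ℕ → Finset V) (c : ι) (t : ℕ) :
    (∃ v ∈ terr (fun u v => κ u = κ v) W t, κ v = c) ↔
      ∀ j ≤ t, ¬ ({v | κ v = c} : Finset V) ⊆ W j := by
  induction t with
  | zero => simp [terr, subset_iff, and_comm]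
  | succ t ih =>
    simp only [terr, Nplus, mem_sdiff, mem_filter, mem_univ, true_and,
      Nat.le_succ_iff, or_imp, forall_and, forall_eq, ← ih]
    simp only [subset_iff, mem_filter, mem_univ, true_and, not_forall]
    grind

theorem terr_label_eq_empty_iff (W : ℕ → Finset V) (t : ℕ) :
    terr (fun u v => κ u = κ v) W t = ∅ ↔ ∀ c, ∃ j ≤ t, ({v | κ v = c} : Finset V) ⊆ W j := by
  have no_label : terr (fun u v => κ u = κ v) W t = ∅ ↔
      ∀ c, ¬ ∃ v ∈ terr (fun u v => κ u = κ v) W t, κ v = c := by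
    simp only [eq_empty_iff_forall_notMem]
    exact ⟨fun h c ⟨v, hv, _⟩ => h v hv, fun h v hv => h _ ⟨v, hv, rfl⟩⟩
  simp only [no_label, exists_mem_terr_label_iff, not_forall, not_not, exists_prop]

theorem exists_strategy_label_iff {l : ℕ} (hl : 0 < l) (k : ℕ) :
    (∃ W : ℕ → Finset V, UsesAtMost W k ∧ ∃ t < l, terr (fun u v => κ u = κ v) W t = ∅) ↔
      ∃ s : ι → Fin l, ∀ j, #({v | s (κ v) = j} : Finset V) ≤ k := by
  constructor
  · rintro ⟨W, hW, t, ht, hcap⟩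
    choose slot hslot hcover using (terr_label_eq_empty_iff κ W t).1 hcap
    refine ⟨fun c => ⟨slot c, by have := hslot c; omega⟩, fun j => ?_⟩
    refine le_trans (card_le_card fun v hv => ?_) (hW j)
    simp only [mem_filter, mem_univ, true_and] at hv
    rw [← hv]
    exact hcover (κ v) (by simp)
  · rintro ⟨s, hs⟩
    refine ⟨fun j => {v | (s (κ v) : ℕ) = j}, fun j => ?_, l - 1, by omega, ?_⟩
    · dsimp only
      by_cases hj : j < l
      · simpa only [Fin.ext_iff] using hs ⟨j, hj⟩
      · rw [filter_eq_empty_iff.2 fun v _ => by have := (s (κ v)).isLt; omega, card_empty]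
        exact Nat.zero_le k
    · refine (terr_label_eq_empty_iff κ _ _).2 fun c => ⟨s c, by omega, fun v hv => ?_⟩
      simp_all

theorem copNumberBy_label_eq_sInf [Fintype ι] {l : ℕ} (hl : 0 < l) :
    copNumberBy (fun u v => κ u = κ v) l =
      sInf {k | ∃ s : ι → Fin l, ∀ j, ∑ c with s c = j, #({v | κ v = c} : Finset V) ≤ k} := by
  simp only [copNumberBy, exists_strategy_label_iff κ hl, card_filter_comp_eq_sum_card_filter]

end LabelGraph

section Packing

variable {ι : Type*} {a : ι → ℕ} {m β : ℕ}

theorem card_eq_three_of_sum_eq {T : Finset ι} (hβ : 0 < β) (halow : ∀ i ∈ T, β < 4 * a i)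
    (haup : ∀ i ∈ T, 2 * a i < β) (hT : ∑ i ∈ T, a i = β) : #T = 3 := by
  have hne : T.Nonempty := nonempty_of_sum_ne_zero (by rw [hT]; omega)
  have h2 : 2 * β < #T * β := calc
    2 * β = ∑ i ∈ T, 2 * a i := by rw [← mul_sum, hT]
    _ < ∑ _i ∈ T, β := sum_lt_sum_of_nonempty hne haup
    _ = #T * β := by rw [sum_const, smul_eq_mul]
  have h4 : #T * β < 4 * β := calc
    #T * β = ∑ _i ∈ T, β := by rw [sum_const, smul_eq_mul]
    _ < ∑ i ∈ T, 4 * a i := sum_lt_sum_of_nonempty hne halow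
    _ = 4 * β := by rw [← mul_sum, hT]
  have := Nat.lt_of_mul_lt_mul_right h2
  have := Nat.lt_of_mul_lt_mul_right h4
  omega

variable [Fintype ι]

theorem sum_filter_option {M : Type*} [AddCommMonoid M] (p : Option ι → Prop) [DecidablePred p]
    (g : Option ι → M) :
    ∑ c with p c, g c = (if p none then g none else 0) + ∑ i with p (some i), g (some i) := by
  rw [sum_filter, Fintype.sum_option, sum_filter]

theorem exists_schedule_of_exact_packing {f : ι → Fin m} (hf : ∀ j, ∑ i with f i = j, a i = β) :
    ∃ s : Option ι → Fin (m + 1), ∀ j, ∑ c with s c = j, c.elim β a ≤ β := by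
  refine ⟨fun c => c.elim (Fin.last m) fun i => (f i).castSucc, fun j => le_of_eq ?_⟩
  rw [sum_filter_option]
  induction j using Fin.lastCases with
  | last => simp [Fin.castSucc_ne_last]
  | cast j => simpa [(Fin.castSucc_ne_last j).symm] using hf j

theorem exists_exact_packing_of_schedule (hsum : ∑ i, a i = m * β) (hpos : ∀ i, 0 < a i)
    {s : Option ι → Fin (m + 1)} (hs : ∀ j, ∑ c with s c = j, c.elim β a ≤ β) :
    ∃ f : ι → Fin m, ∀ j, ∑ i with f i = j, a i = β := by
  have htotal : ∑ j, ∑ c with s c = j, c.elim β a = ∑ _j : Fin (m + 1), β := by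
    rw [sum_fiberwise, Fintype.sum_option, sum_const, card_univ, Fintype.card_fin, smul_eq_mul]
    simp [hsum, add_mul, add_comm]
  have htight j : ∑ c with s c = j, c.elim β a = β :=
    (sum_eq_sum_iff_of_le fun j _ => hs j).1 htotal j (mem_univ j)
  have hfree i : s (some i) ≠ s none := by
    intro hi
    have hload := htight (s none)
    simp only [sum_filter_option, if_pos, Option.elim_none, Option.elim_some] at hload
    have := single_le_sum (f := a) (fun _ _ => Nat.zero_le _)
      (mem_filter.2 ⟨mem_univ i, hi⟩ : i ∈ ({i | s (some i) = s none} : Finset ι))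
    have := hpos i
    omega
  refine ⟨fun i => (finSuccAboveEquiv (s none)).symm ⟨s (some i), hfree i⟩, fun j => ?_⟩
  have hfiber i : (finSuccAboveEquiv (s none)).symm ⟨s (some i), hfree i⟩ = j ↔
      s (some i) = (s none).succAbove j := by
    rw [Equiv.symm_apply_eq, finSuccAboveEquiv_apply, Subtype.ext_iff]
  simpa [sum_filter_option, hfiber, ((s none).succAbove_ne j).symm]
    using htight ((s none).succAbove j)

end Packing

def blockLabel {ι : Type*} (a : ι → ℕ) (β : ℕ) : (Σ i, Fin (a i)) ⊕ Fin β → Option ι :=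
  Sum.elim (fun x => some x.1) fun _ => none

theorem threePartitionTimedDigraph_eq_label (m : ℕ) (a : Fin (3 * m) → ℕ) (β : ℕ) :
    threePartitionTimedDigraph m a β = fun u v => blockLabel a β u = blockLabel a β v := by
  funext u v
  rcases u with _ | _ <;> rcases v with _ | _ <;> simp [threePartitionTimedDigraph, blockLabel]

theorem card_filter_blockLabel_eq {ι : Type*} [Fintype ι] [DecidableEq ι] (a : ι → ℕ) (β : ℕ)
    (c : Option ι) : #({v | blockLabel a β v = c} : Finset _) = c.elim β a := by
  rw [card_filter, Fintype.sum_sum_type, Fintype.sum_sigma]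
  cases c <;> simp [blockLabel]

theorem copNumberBy_threePartitionTimedDigraph_general (m : ℕ) (hm : 1 ≤ m)
    (a : Fin (3 * m) → ℕ) (β : ℕ)
    (hβ : m * β = ∑ i, a i)
    (halow : ∀ i, β < 4 * a i) (haup : ∀ i, 2 * a i < β) :
    copNumberBy (threePartitionTimedDigraph m a β) (m + 1) = β ↔
      ∃ f : Fin (3 * m) → Fin m,
        (∀ j, (Finset.univ.filter (fun i => f i = j)).card = 3) ∧
        (∀ j, ∑ i ∈ Finset.univ.filter (fun i => f i = j), a i = β) := by
  have hβpos : 0 < β := by have := haup ⟨0, by omega⟩; omega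
  have hapos i : 0 < a i := by have := halow i; omega
  rw [threePartitionTimedDigraph_eq_label, copNumberBy_label_eq_sInf _ m.succ_pos]
  simp only [card_filter_blockLabel_eq]
  set S := {k | ∃ s : Option (Fin (3 * m)) → Fin (m + 1), ∀ j, ∑ c with s c = j, c.elim β a ≤ k}
  have hlower : ∀ k ∈ S, β ≤ k := fun k ⟨s, hs⟩ =>
    (single_le_sum (f := fun c => c.elim β a) (fun _ _ => Nat.zero_le _)
      (mem_filter.2 ⟨mem_univ none, rfl⟩ : none ∈ ({c | s c = s none} : Finset _))).trans
      (hs (s none))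
  have hexact : β ∈ S ↔ ∃ f : Fin (3 * m) → Fin m, ∀ j, ∑ i with f i = j, a i = β :=
    ⟨fun ⟨_, hs⟩ => exists_exact_packing_of_schedule hβ.symm hapos hs,
      fun ⟨_, hf⟩ => exists_schedule_of_exact_packing hf⟩
  constructor
  · intro h
    obtain ⟨f, hf⟩ := hexact.1 (h ▸ Nat.sInf_mem (Nat.nonempty_of_pos_sInf (h ▸ hβpos)))
    exact ⟨f, fun j =>
      card_eq_three_of_sum_eq hβpos (fun i _ => halow i) (fun i _ => haup i) (hf j), hf⟩
  · rintro ⟨f, -, hf⟩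
    exact IsLeast.csInf_eq ⟨hexact.2 ⟨f, hf⟩, hlower⟩

/-- `cn(D, m+1) = β` iff the 3-partition instance is a yes-instance. -/
theorem copNumberBy_threePartitionTimedDigraph (m : ℕ) (hm : 1 ≤ m)
    (a : Fin (3 * m) → ℕ) (β : ℕ)
    (hβ : m * β = ∑ i, a i)
    (ha : ∀ i, 2 < a i)
    (halow : ∀ i, β < 4 * a i) (haup : ∀ i, 2 * a i < β) :
    copNumberBy (threePartitionTimedDigraph m a β) (m + 1) = β ↔
      ∃ f : Fin (3 * m) → Fin m,
        (∀ j, (Finset.univ.filter (fun i => f i = j)).card = 3) ∧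
        (∀ j, ∑ i ∈ Finset.univ.filter (fun i => f i = j), a i = β) :=
  copNumberBy_threePartitionTimedDigraph_general m hm a β hβ halow haup
end

section
/- Let D = (V, A) be a finite digraph on n = |V| vertices and let k be an integer with 0 ≤ k ≤ n. If cn(D) ≤ k, then the number of arcs of D satisfies |A| ≤ nk + (n − k)(n + k − 1)/2. -/
open scoped Classical

/-- The number of arcs of the digraph with arc relation `A`. -/
noncomputable def numArcs {V : Type} [Fintype V] (A : V → V → Prop) : ℕ :=
  (Finset.univ.filter (fun p : V × V => A p.1 p.2)).card

section lemmas
variable {V : Type} [Fintype V] [DecidableEq V]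

lemma terr_zero (A : V → V → Prop) (W : ℕ → Finset V) :
    terr A W 0 = Finset.univ \ W 0 := rfl

lemma terr_succ (A : V → V → Prop) (W : ℕ → Finset V) (i : ℕ) :
    terr A W (i + 1) = Nplus A (terr A W i) \ W (i + 1) := rfl

omit [DecidableEq V] in
lemma Nplus_empty (A : V → V → Prop) : Nplus A ∅ = ∅ := by
  simp [Nplus]

lemma terr_empty_of_ge (A : V → V → Prop) (W : ℕ → Finset V) {t : ℕ}
    (ht : terr A W t = ∅) : ∀ i, t ≤ i → terr A W i = ∅ := by
  intro i hi
  obtain ⟨j, rfl⟩ := Nat.exists_eq_add_of_le hi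
  clear hi
  induction j with
  | zero => simpa using ht
  | succ j ih =>
    have : t + (j + 1) = (t + j) + 1 := by omega
    rw [this, terr_succ, ih, Nplus_empty]
    simp

lemma sum_min_eq (n k : ℕ) (hk : k ≤ n) :
    ∑ j ∈ Finset.range n, min n (k + j) = n * k + (n - k) * (n + k - 1) / 2 := by
  set m := n - k with hm
  have hn : n = k + m := by omega
  have hsplit : ∑ j ∈ Finset.range n, min n (k + j)
      = ∑ j ∈ Finset.range m, min n (k + j) + ∑ j ∈ Finset.Ico m n, min n (k + j) := by
    rw [Finset.range_eq_Ico, ← Finset.sum_Ico_consecutive _ (Nat.zero_le m) (by omega),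
      ← Finset.range_eq_Ico]
  have h1 : ∑ j ∈ Finset.range m, min n (k + j) = ∑ j ∈ Finset.range m, (k + j) :=
    Finset.sum_congr rfl fun j hj => min_eq_right (by
      simp only [Finset.mem_range] at hj; omega)
  have h2 : ∑ j ∈ Finset.Ico m n, min n (k + j) = k * n := by
    rw [Finset.sum_congr rfl (fun j hj => ?_), Finset.sum_const, Nat.card_Ico, smul_eq_mul]
    · congr 1; omega
    · have := (Finset.mem_Ico.mp hj).1
      exact min_eq_left (by omega)
  have h3 : ∑ j ∈ Finset.range m, (k + j) = m * k + ∑ j ∈ Finset.range m, j := by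
    rw [Finset.sum_add_distrib, Finset.sum_const, Finset.card_range, smul_eq_mul]
  set S := ∑ j ∈ Finset.range m, j with hS
  have hSgauss : S * 2 = m * (m - 1) := Finset.sum_range_id_mul_two m
  have hprod : m * (n + k - 1) = S * 2 + m * k * 2 := by
    rcases Nat.eq_zero_or_pos m with h0 | hpos
    · rw [h0] at hSgauss ⊢
      simp at hSgauss ⊢
      omega
    · have he : n + k - 1 = (m - 1) + 2 * k := by omega
      rw [he, Nat.mul_add, ← hSgauss]
      ring
  have hdiv : m * (n + k - 1) / 2 = S + m * k := by
    rw [hprod, ← Nat.add_mul, Nat.mul_div_cancel _ (by norm_num)]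
  rw [hsplit, h1, h3, h2, hdiv]
  ring

end lemmas

/-- If `cn(D) ≤ k` then `|A| ≤ nk + (n-k)(n+k-1)/2`, where `n = |V|`. -/
theorem numArcs_le_of_copNumber_le {V : Type} [Fintype V] [DecidableEq V]
    (A : V → V → Prop) (k : ℕ) (hk : k ≤ Fintype.card V)
    (h : copNumber A ≤ k) :
    numArcs A ≤ Fintype.card V * k +
      (Fintype.card V - k) * (Fintype.card V + k - 1) / 2 := by
  classical
  set n := Fintype.card V with hn
  -- extract a winning strategy
  have hmem : copNumber A ∈ {k | ∃ W : ℕ → Finset V, UsesAtMost W k ∧ ∃ t, terr A W t = ∅} := by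
    apply Nat.sInf_mem
    refine ⟨n, fun _ => Finset.univ, fun i => le_of_eq Finset.card_univ, 0, ?_⟩
    rw [terr_zero]; simp
  obtain ⟨W, hW, t, ht⟩ := hmem
  have hWk : ∀ i, (W i).card ≤ k := fun i => le_trans (hW i) h
  have hte : ∀ i, t ≤ i → terr A W i = ∅ := terr_empty_of_ge A W ht
  set P : V → Prop := fun x => ∃ i, x ∈ terr A W i with hP
  set m : V → ℕ := fun x => @Nat.findGreatest (fun i => x ∈ terr A W i) (Classical.decPred _) t with hm
  have hmx : ∀ x, P x → x ∈ terr A W (m x) := by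
    rintro x ⟨i, hi⟩
    have hit : i ≤ t := by
      by_contra hc
      push_neg at hc
      rw [hte i (le_of_lt hc)] at hi
      exact absurd hi (Finset.notMem_empty x)
    show x ∈ terr A W (m x)
    rw [hm]
    exact @Nat.findGreatest_spec i (fun j => x ∈ terr A W j) (Classical.decPred _) t hit hi
  have hmlt : ∀ x, P x → m x < t := by
    intro x hx
    have h1 := hmx x hx
    have h2 : m x ≤ t := by
      rw [hm]
      exact @Nat.findGreatest_le (fun j => x ∈ terr A W j) (Classical.decPred _) t
    rcases lt_or_eq_of_le h2 with h3 | h3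
    · exact h3
    · rw [h3, hte t le_rfl] at h1
      exact absurd h1 (Finset.notMem_empty x)
  set Q : Finset V := Finset.univ.filter P with hQ
  -- out-degree
  set deg : V → ℕ := fun x => (Finset.univ.filter (fun y => A x y)).card with hdeg
  -- vertices in a successor territory have larger m and are in Q
  have hsucc : ∀ x, P x → ∀ z ∈ terr A W (m x + 1), z ∈ Q ∧ m x < m z := by
    intro x hx z hz
    constructor
    · simp only [hQ, Finset.mem_filter, Finset.mem_univ, true_and]
      exact ⟨m x + 1, hz⟩
    · have h1 : m x + 1 ≤ t := hmlt x hx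
      have h2 : m x + 1 ≤ m z := by
        rw [hm]
        exact @Nat.le_findGreatest (m x + 1) (fun j => z ∈ terr A W j) (Classical.decPred _) t h1 hz
      omega
  -- key degree bound
  have hdeg1 : ∀ x, P x → deg x ≤ k + (Q.filter (fun z => m x < m z)).card := by
    intro x hx
    have hsub1 : Finset.univ.filter (fun y => A x y) ⊆ Nplus A (terr A W (m x)) := by
      intro y hy
      simp only [Finset.mem_filter, Finset.mem_univ, true_and] at hy
      simp only [Nplus, Finset.mem_filter, Finset.mem_univ, true_and]
      exact ⟨x, hmx x hx, hy⟩
    have hsub2 : Nplus A (terr A W (m x)) ⊆ terr A W (m x + 1) ∪ W (m x + 1) := by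
      intro y hy
      rw [terr_succ]
      rw [Finset.mem_union, Finset.mem_sdiff]
      by_cases hw : y ∈ W (m x + 1)
      · exact Or.inr hw
      · exact Or.inl ⟨hy, hw⟩
    have hsub3 : terr A W (m x + 1) ⊆ Q.filter (fun z => m x < m z) := by
      intro z hz
      obtain ⟨h1, h2⟩ := hsucc x hx z hz
      simp only [Finset.mem_filter]
      simp only [hQ, Finset.mem_filter] at h1
      exact ⟨Finset.mem_filter.mpr h1, h2⟩
    calc deg x ≤ (terr A W (m x + 1) ∪ W (m x + 1)).card :=
          Finset.card_le_card (hsub1.trans hsub2)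
      _ ≤ (terr A W (m x + 1)).card + (W (m x + 1)).card := Finset.card_union_le _ _
      _ ≤ (Q.filter (fun z => m x < m z)).card + k :=
          Nat.add_le_add (Finset.card_le_card hsub3) (hWk _)
      _ = k + (Q.filter (fun z => m x < m z)).card := Nat.add_comm _ _
  have hdegn : ∀ x, deg x ≤ n := fun x => (Finset.card_filter_le _ _).trans (le_of_eq Finset.card_univ)
  -- linear key
  set e : V ≃ Fin n := Fintype.equivFin V with he
  set K : V → ℕ := fun x => m x * n + (e x : ℕ) with hKdef
  have hKlt : ∀ x y : V, m x < m y → K x < K y := by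
    intro x y hxy
    have h1 : (e x : ℕ) < n := (e x).isLt
    calc K x = m x * n + (e x : ℕ) := rfl
      _ < m x * n + n := by omega
      _ = (m x + 1) * n := by ring
      _ ≤ m y * n := Nat.mul_le_mul_right n hxy
      _ ≤ K y := Nat.le_add_right _ _
  have hKinj : Function.Injective K := by
    intro x y hxy
    rcases lt_trichotomy (m x) (m y) with h1 | h1 | h1
    · exact absurd hxy (Nat.ne_of_lt (hKlt x y h1))
    · simp only [hKdef] at hxy
      rw [h1] at hxy
      have h2 : (e x : ℕ) = (e y : ℕ) := by omega
      exact e.injective (Fin.val_injective h2)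
    · exact absurd hxy.symm (Nat.ne_of_lt (hKlt y x h1))
  set φ : V → ℕ := fun x => (Q.filter (fun z => K x < K z)).card with hφ
  have hφlt : ∀ x ∈ Q, φ x < Q.card := by
    intro x hx
    have hsub : Q.filter (fun z => K x < K z) ⊆ Q.erase x := by
      intro z hz
      simp only [Finset.mem_filter] at hz
      refine Finset.mem_erase.mpr ⟨?_, hz.1⟩
      intro hzx
      rw [hzx] at hz
      omega
    calc φ x ≤ (Q.erase x).card := Finset.card_le_card hsub
      _ < Q.card := by
          rw [Finset.card_erase_of_mem hx]
          have := Finset.card_pos.mpr ⟨x, hx⟩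
          omega
  have hφanti : ∀ x ∈ Q, ∀ y ∈ Q, K x < K y → φ y < φ x := by
    intro x hx y hy hxy
    apply Finset.card_lt_card
    rw [Finset.ssubset_iff_of_subset]
    · exact ⟨y, Finset.mem_filter.mpr ⟨hy, hxy⟩, by simp⟩
    · intro z hz
      simp only [Finset.mem_filter] at hz ⊢
      exact ⟨hz.1, lt_trans hxy hz.2⟩
  have hφinj : ∀ x ∈ Q, ∀ y ∈ Q, φ x = φ y → x = y := by
    intro x hx y hy hxy
    by_contra hne
    rcases lt_trichotomy (K x) (K y) with h1 | h1 | h1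
    · exact absurd hxy.symm (Nat.ne_of_lt (hφanti x hx y hy h1))
    · exact hne (hKinj h1)
    · exact absurd hxy (Nat.ne_of_lt (hφanti y hy x hx h1))
  have hcφ : ∀ x ∈ Q, (Q.filter (fun z => m x < m z)).card ≤ φ x := by
    intro x hx
    apply Finset.card_le_card
    intro z hz
    simp only [Finset.mem_filter] at hz ⊢
    exact ⟨hz.1, hKlt x z hz.2⟩
  have himg : Q.image φ = Finset.range Q.card := by
    apply Finset.eq_of_subset_of_card_le
    · intro j hj
      obtain ⟨x, hx, rfl⟩ := Finset.mem_image.mp hj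
      exact Finset.mem_range.mpr (hφlt x hx)
    · rw [Finset.card_range, Finset.card_image_of_injOn]
      intro x hx y hy
      exact hφinj x (by simpa using hx) y (by simpa using hy)
  -- counting arcs as sum of out-degrees
  have hcount : numArcs A = ∑ x : V, deg x := by
    unfold numArcs
    rw [Finset.card_eq_sum_card_fiberwise (f := Prod.fst) (t := Finset.univ)
      (fun x _ => Finset.mem_univ _)]
    refine Finset.sum_congr rfl fun x _ => ?_
    refine Finset.card_bij (fun p _ => p.2) ?_ ?_ ?_
    · intro p hp
      simp only [Finset.mem_filter, Finset.mem_univ, true_and] at hp ⊢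
      rw [← hp.2]; exact hp.1
    · intro p hp q hq hpq
      simp only [Finset.mem_filter] at hp hq
      exact Prod.ext (hp.2.trans hq.2.symm) hpq
    · intro y hy
      simp only [Finset.mem_filter, Finset.mem_univ, true_and] at hy
      exact ⟨(x, y), by simp [hy], rfl⟩
  set s := (Finset.univ.filter (fun x => ¬ P x)).card with hs
  have hsk : s ≤ k := by
    have hsub : Finset.univ.filter (fun x => ¬ P x) ⊆ W 0 := by
      intro x hx
      simp only [Finset.mem_filter, Finset.mem_univ, true_and] at hx
      by_contra hw
      exact hx ⟨0, by rw [terr_zero]; exact Finset.mem_sdiff.mpr ⟨Finset.mem_univ x, hw⟩⟩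
    exact (Finset.card_le_card hsub).trans (hWk 0)
  have hQcard : Q.card + s = n := by
    rw [hQ, hs]
    rw [Finset.card_filter_add_card_filter_not]
    exact Finset.card_univ
  -- sum over Q
  have hsumQ : ∑ x ∈ Q, deg x ≤ ∑ j ∈ Finset.range Q.card, min n (k + j) := by
    calc ∑ x ∈ Q, deg x ≤ ∑ x ∈ Q, min n (k + φ x) := by
          apply Finset.sum_le_sum
          intro x hx
          have hPx : P x := (Finset.mem_filter.mp hx).2
          refine le_min (hdegn x) ?_
          exact (hdeg1 x hPx).trans (Nat.add_le_add_left (hcφ x hx) k)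
      _ = ∑ j ∈ Q.image φ, min n (k + j) := (Finset.sum_image (f := fun j => min n (k + j)) (g := φ) hφinj).symm
      _ = ∑ j ∈ Finset.range Q.card, min n (k + j) := by rw [himg]
  have hsumQc : ∑ x ∈ Finset.univ.filter (fun x => ¬ P x), deg x ≤ s * n := by
    calc ∑ x ∈ Finset.univ.filter (fun x => ¬ P x), deg x
        ≤ ∑ _x ∈ Finset.univ.filter (fun x => ¬ P x), n := Finset.sum_le_sum fun x _ => hdegn x
      _ = s * n := by rw [Finset.sum_const, smul_eq_mul]
  -- assemble
  have htail : ∑ j ∈ Finset.Ico Q.card n, min n (k + j) = s * n := by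
    rw [Finset.sum_congr rfl (fun j hj => ?_), Finset.sum_const, Nat.card_Ico, smul_eq_mul]
    · congr 1; omega
    · have h1 := (Finset.mem_Ico.mp hj).1
      exact min_eq_left (by omega)
  have hfinal : numArcs A ≤ ∑ j ∈ Finset.range n, min n (k + j) := by
    rw [hcount, ← Finset.sum_filter_add_sum_filter_not Finset.univ P deg]
    have hQn : Q.card ≤ n := by omega
    rw [Finset.range_eq_Ico, ← Finset.sum_Ico_consecutive _ (Nat.zero_le Q.card) hQn,
      ← Finset.range_eq_Ico, htail]
    exact Nat.add_le_add hsumQ hsumQc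
  calc numArcs A ≤ ∑ j ∈ Finset.range n, min n (k + j) := hfinal
    _ = n * k + (n - k) * (n + k - 1) / 2 := sum_min_eq n k hk
end

section
/- For every integer n ≥ 3 there exists a tournament T_n on 3n − 2 vertices such that cn(T_n) = 2 and every feedback vertex set of T_n has size at least n. (One such T_n consists of n − 1 directed triangles C_1, ..., C_{n−1} and a vertex v, with all arcs from every vertex of C_i to every vertex of C_j for 1 ≤ i < j ≤ n−1, all arcs from v to every vertex of C_i for 1 ≤ i ≤ n−2, and all arcs from every vertex of C_{n−1} to v.) -/
open scoped Classical

/-- The subdigraph induced by `S` is acyclic (loops count as cycles). -/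
def AcyclicOn {V : Type} (A : V → V → Prop) (S : Finset V) : Prop :=
  ∀ v ∈ S, ¬ Relation.TransGen (fun x y => x ∈ S ∧ y ∈ S ∧ A x y) v v

/-- A tournament: a loopless digraph with exactly one arc between every pair of
distinct vertices. -/
def IsTournament {V : Type} (A : V → V → Prop) : Prop :=
  (∀ v, ¬ A v v) ∧ ∀ u v : V, u ≠ v → (A u v ↔ ¬ A v u)

/-! ### The construction

Vertices `0, …, 3n-4` form `n-1` directed triangles `C_j = {3j, 3j+1, 3j+2}`
(with arcs `3j → 3j+1 → 3j+2 → 3j`), all arcs go from `C_i` to `C_j` for `i < j`,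
vertex `v = 3n-3` beats every vertex of `C_j` for `j ≤ n-3`, and every vertex of
`C_{n-2}` beats `v`. -/

def tArc (n : ℕ) (x y : Fin (3*n-2)) : Prop :=
  (x.val = 3*n-3 ∧ y.val < 3*n-6) ∨
  (y.val = 3*n-3 ∧ 3*n-6 ≤ x.val ∧ x.val < 3*n-3) ∨
  (x.val < 3*n-3 ∧ y.val < 3*n-3 ∧
    (x.val/3 < y.val/3 ∨ (x.val/3 = y.val/3 ∧ y.val % 3 = (x.val+1) % 3)))

lemma notBoth {V : Type} {S : Finset V} (h : S.card ≤ 1) {u w : V}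
    (hu : u ∈ S) (hw : w ∈ S) (hne : u ≠ w) : False := by
  have := Finset.one_lt_card.mpr ⟨u, hu, w, hw, hne⟩; omega

lemma mem_Nplus {V : Type} [Fintype V] (A : V → V → Prop) (S : Finset V) (y : V) :
    y ∈ Nplus A S ↔ ∃ x ∈ S, A x y := by
  simp [Nplus]

lemma exists_fin (n m : ℕ) (h : m < 3*n-2) : ∃ z : Fin (3*n-2), z.val = m := ⟨⟨m, h⟩, rfl⟩

/-! ### The winning strategy with two cops

One cop sits on `v` forever; the other sweeps the triangles in order, clearing
triangle `C_q` during steps `3q+1, 3q+2, 3q+3` by visiting `3q, 3q+2, 3q+1`. -/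

noncomputable def copW (n : ℕ) (hn : 3 ≤ n) (i : ℕ) : Finset (Fin (3*n-2)) :=
  {⟨3*n-3, by omega⟩,
   ⟨min (if (i-1) % 3 = 0 then 3*((i-1)/3)
         else if (i-1) % 3 = 1 then 3*((i-1)/3)+2
         else 3*((i-1)/3)+1) (3*n-3), by omega⟩}

lemma copW_card (n : ℕ) (hn : 3 ≤ n) (i : ℕ) : (copW n hn i).card ≤ 2 := by
  apply (Finset.card_insert_le _ _).trans
  simp

lemma copW_invariant (n : ℕ) (hn : 3 ≤ n) (i : ℕ) :
    ∀ x ∈ terr (tArc n) (copW n hn) i,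
      x.val ≠ 3*n-3 ∧
      (i % 3 = 0 → 3*(i/3) ≤ x.val) ∧
      (i % 3 = 1 → 3*(i/3)+1 ≤ x.val) ∧
      (i % 3 = 2 → (x.val = 3*(i/3) ∨ 3*(i/3)+3 ≤ x.val)) := by
  induction i with
  | zero =>
      intro x hx
      simp only [terr, copW, Finset.mem_sdiff, Finset.mem_insert, Finset.mem_singleton,
        Finset.mem_univ, true_and, Fin.ext_iff, not_or] at hx
      have := x.isLt
      omega
  | succ i ih =>
      intro x hx
      simp only [terr, Finset.mem_sdiff] at hx
      obtain ⟨hxN, hxW⟩ := hx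
      simp only [Nplus, Finset.mem_filter, Finset.mem_univ, true_and] at hxN
      obtain ⟨y, hy, harc⟩ := hxN
      have hyI := ih y hy
      simp only [copW, Finset.mem_insert, Finset.mem_singleton, Fin.ext_iff, not_or,
        Nat.add_sub_cancel] at hxW
      simp only [tArc] at harc
      have hxlt := x.isLt
      have hylt := y.isLt
      have h3 : i % 3 = 0 ∨ i % 3 = 1 ∨ i % 3 = 2 := by omega
      rcases h3 with h3 | h3 | h3 <;>
        simp only [h3] at hxW <;> norm_num at hxW <;> omega

lemma copW_win (n : ℕ) (hn : 3 ≤ n) : terr (tArc n) (copW n hn) (3*(n-1)) = ∅ := by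
  rw [Finset.eq_empty_iff_forall_notMem]
  intro x hx
  have h := copW_invariant n hn (3*(n-1)) x hx
  have := x.isLt
  omega

/-! ### One cop cannot win -/

lemma one_cop_invariant (n : ℕ) (hn : 3 ≤ n) (W : ℕ → Finset (Fin (3*n-2)))
    (hW : UsesAtMost W 1) (i : ℕ) :
    (∃ x ∈ terr (tArc n) W i, x.val < 3*n-6) ∨
    (∃ a ∈ terr (tArc n) W i, ∃ b ∈ terr (tArc n) W i,
       a ≠ b ∧ 3*n-6 ≤ a.val ∧ a.val ≤ 3*n-4 ∧ 3*n-6 ≤ b.val ∧ b.val ≤ 3*n-4) ∨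
    (∃ x ∈ terr (tArc n) W i, x.val = 3*n-3) := by
  induction i with
  | zero =>
      obtain ⟨z0, hz0⟩ := exists_fin n 0 (by omega)
      obtain ⟨z1, hz1⟩ := exists_fin n 1 (by omega)
      have hne : z0 ≠ z1 := fun h => by rw [h] at hz0; omega
      by_cases h0 : z0 ∈ W 0
      · left
        refine ⟨z1, ?_, by omega⟩
        simp only [terr, Finset.mem_sdiff, Finset.mem_univ, true_and]
        exact fun h1 => notBoth (hW 0) h0 h1 hne
      · left
        refine ⟨z0, ?_, by omega⟩
        simp only [terr, Finset.mem_sdiff, Finset.mem_univ, true_and]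
        exact h0
  | succ i ih =>
      have hmem : ∀ x : Fin (3*n-2), x ∈ Nplus (tArc n) (terr (tArc n) W i) →
          x ∉ W (i+1) → x ∈ terr (tArc n) W (i+1) := by
        intro x h1 h2
        simp only [terr, Finset.mem_sdiff]
        exact ⟨h1, h2⟩
      rcases ih with ⟨x, hx, hxlt⟩ | ⟨a, ha, b, hb, hab, ha1, ha2, hb1, hb2⟩ | ⟨x, hx, hxv⟩
      · -- the robber may stand in an "early" triangle: all of `C_{n-2}` is in `N⁺`
        have hxl := x.isLt
        obtain ⟨p, hp⟩ := exists_fin n (3*n-6) (by omega)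
        obtain ⟨q, hq⟩ := exists_fin n (3*n-5) (by omega)
        obtain ⟨r, hr⟩ := exists_fin n (3*n-4) (by omega)
        have harc : ∀ z : Fin (3*n-2), 3*n-6 ≤ z.val → z.val ≤ 3*n-4 →
            z ∈ Nplus (tArc n) (terr (tArc n) W i) := by
          intro z h1 h2
          exact (mem_Nplus _ _ _).mpr ⟨x, hx, by simp only [tArc]; omega⟩
        have hNp := harc p (by omega) (by omega)
        have hNq := harc q (by omega) (by omega)
        have hNr := harc r (by omega) (by omega)
        have hpq : p ≠ q := fun h => by rw [h] at hp; omega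
        have hpr : p ≠ r := fun h => by rw [h] at hp; omega
        have hqr : q ≠ r := fun h => by rw [h] at hq; omega
        by_cases hA : p ∈ W (i+1)
        · have hB : q ∉ W (i+1) := fun h => notBoth (hW _) hA h hpq
          have hC : r ∉ W (i+1) := fun h => notBoth (hW _) hA h hpr
          exact Or.inr (Or.inl ⟨q, hmem q hNq hB, r, hmem r hNr hC, hqr,
            by omega, by omega, by omega, by omega⟩)
        · by_cases hB : q ∈ W (i+1)
          · have hC : r ∉ W (i+1) := fun h => notBoth (hW _) hB h hqr
            exact Or.inr (Or.inl ⟨p, hmem p hNp hA, r, hmem r hNr hC, hpr,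
              by omega, by omega, by omega, by omega⟩)
          · exact Or.inr (Or.inl ⟨p, hmem p hNp hA, q, hmem q hNq hB, hpq,
              by omega, by omega, by omega, by omega⟩)
      · -- two possible robber positions in the last triangle
        have hab' : a.val ≠ b.val := fun h => hab (Fin.ext h)
        have hal := a.isLt
        have hbl := b.isLt
        obtain ⟨sa, hsa⟩ := exists_fin n (3*n-6 + (a.val+1)%3) (by omega)
        obtain ⟨sb, hsb⟩ := exists_fin n (3*n-6 + (b.val+1)%3) (by omega)
        obtain ⟨vt, hvt⟩ := exists_fin n (3*n-3) (by omega)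
        have hNsa : sa ∈ Nplus (tArc n) (terr (tArc n) W i) :=
          (mem_Nplus _ _ _).mpr ⟨a, ha, by simp only [tArc]; omega⟩
        have hNsb : sb ∈ Nplus (tArc n) (terr (tArc n) W i) :=
          (mem_Nplus _ _ _).mpr ⟨b, hb, by simp only [tArc]; omega⟩
        have hNvt : vt ∈ Nplus (tArc n) (terr (tArc n) W i) :=
          (mem_Nplus _ _ _).mpr ⟨a, ha, by simp only [tArc]; omega⟩
        have hsab : sa ≠ sb := fun h => by rw [h] at hsa; omega
        have hsavt : vt ≠ sa := fun h => by rw [h] at hvt; omega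
        have hsbvt : vt ≠ sb := fun h => by rw [h] at hvt; omega
        by_cases hv : vt ∈ W (i+1)
        · have hA : sa ∉ W (i+1) := fun h => notBoth (hW _) hv h hsavt
          have hB : sb ∉ W (i+1) := fun h => notBoth (hW _) hv h hsbvt
          exact Or.inr (Or.inl ⟨sa, hmem sa hNsa hA, sb, hmem sb hNsb hB, hsab,
            by omega, by omega, by omega, by omega⟩)
        · exact Or.inr (Or.inr ⟨vt, hmem vt hNvt hv, hvt⟩)
      · -- the robber may stand on `v`
        obtain ⟨z0, hz0⟩ := exists_fin n 0 (by omega)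
        obtain ⟨z1, hz1⟩ := exists_fin n 1 (by omega)
        have harc : ∀ z : Fin (3*n-2), z.val < 3*n-6 →
            z ∈ Nplus (tArc n) (terr (tArc n) W i) := by
          intro z h1
          exact (mem_Nplus _ _ _).mpr ⟨x, hx, by simp only [tArc]; omega⟩
        have hN0 := harc z0 (by omega)
        have hN1 := harc z1 (by omega)
        have h01 : z0 ≠ z1 := fun h => by rw [h] at hz0; omega
        by_cases h0 : z0 ∈ W (i+1)
        · have h1 : z1 ∉ W (i+1) := fun h => notBoth (hW _) h0 h h01
          exact Or.inl ⟨z1, hmem z1 hN1 h1, by omega⟩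
        · exact Or.inl ⟨z0, hmem z0 hN0 h0, by omega⟩

/-! ### Every feedback vertex set has size at least `n` -/

lemma fvs_lower (n : ℕ) (hn : 3 ≤ n) (X : Finset (Fin (3*n-2)))
    (hX : AcyclicOn (tArc n) (Finset.univ \ X)) : n ≤ X.card := by
  by_contra hcard
  push_neg at hcard
  -- every triangle meets X
  have hA : ∀ j : Fin (n-1), ∃ x ∈ X, 3*j.val ≤ x.val ∧ x.val < 3*j.val+3 := by
    intro j
    by_contra h
    push_neg at h
    have hj := j.isLt
    obtain ⟨a, hav⟩ := exists_fin n (3*j.val) (by omega)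
    obtain ⟨b, hbv⟩ := exists_fin n (3*j.val+1) (by omega)
    obtain ⟨c, hcv⟩ := exists_fin n (3*j.val+2) (by omega)
    have hmem : ∀ z : Fin (3*n-2), 3*j.val ≤ z.val → z.val < 3*j.val+3 →
        z ∈ Finset.univ \ X := by
      intro z h1 h2
      simp only [Finset.mem_sdiff, Finset.mem_univ, true_and]
      intro hz
      have := h z hz h1
      omega
    have haS := hmem a (by omega) (by omega)
    have hbS := hmem b (by omega) (by omega)
    have hcS := hmem c (by omega) (by omega)
    refine hX a haS (Relation.TransGen.head ⟨haS, hbS, ?_⟩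
      (Relation.TransGen.head ⟨hbS, hcS, ?_⟩
        (Relation.TransGen.single ⟨hcS, haS, ?_⟩))) <;>
      · simp only [tArc]; omega
  choose g hgX hg1 hg2 using hA
  have hinj : Function.Injective g := by
    intro j k hjk
    have h1 := hg1 j; have h2 := hg2 j; have h3 := hg1 k; have h4 := hg2 k
    rw [hjk] at h1 h2
    exact Fin.ext (by omega)
  have hsub : Finset.univ.image g ⊆ X := by
    intro x hx
    simp only [Finset.mem_image] at hx
    obtain ⟨j, _, rfl⟩ := hx
    exact hgX j
  have hcard1 : (Finset.univ.image g).card = n - 1 := by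
    rw [Finset.card_image_of_injective _ hinj]
    simp
  have hXeq : Finset.univ.image g = X :=
    Finset.eq_of_subset_of_card_le hsub (by omega)
  have hXval : ∀ x ∈ X, ∃ j : Fin (n-1), g j = x := by
    intro x hx
    rw [← hXeq] at hx
    simp only [Finset.mem_image] at hx
    obtain ⟨j, _, hj⟩ := hx
    exact ⟨j, hj⟩
  -- `v ∉ X`
  obtain ⟨vt, hvt⟩ := exists_fin n (3*n-3) (by omega)
  have hvX : vt ∉ X := by
    intro hv
    obtain ⟨j, hj⟩ := hXval vt hv
    have h1 := hg1 j; have h2 := hg2 j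
    rw [hj] at h1 h2
    have := j.isLt
    omega
  -- pick a vertex of `C_0` outside `X`
  have hpick0 : ∃ a : Fin (3*n-2), a ∉ X ∧ a.val < 3 := by
    obtain ⟨z0, hz0⟩ := exists_fin n 0 (by omega)
    obtain ⟨z1, hz1⟩ := exists_fin n 1 (by omega)
    by_cases h0 : z0 ∈ X
    · refine ⟨z1, ?_, by omega⟩
      intro h1
      obtain ⟨j0, hj0⟩ := hXval z0 h0
      obtain ⟨j1, hj1⟩ := hXval z1 h1
      have a1 := hg1 j0; have a2 := hg2 j0; have b1 := hg1 j1; have b2 := hg2 j1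
      rw [hj0] at a1 a2; rw [hj1] at b1 b2
      have : j0 = j1 := Fin.ext (by omega)
      rw [this, hj1] at hj0
      rw [hj0] at hz1
      omega
    · exact ⟨z0, h0, by omega⟩
  -- pick a vertex of `C_{n-2}` outside `X`
  have hpickL : ∃ b : Fin (3*n-2), b ∉ X ∧ 3*n-6 ≤ b.val ∧ b.val ≤ 3*n-5 := by
    obtain ⟨z0, hz0⟩ := exists_fin n (3*n-6) (by omega)
    obtain ⟨z1, hz1⟩ := exists_fin n (3*n-5) (by omega)
    by_cases h0 : z0 ∈ X
    · refine ⟨z1, ?_, by omega, by omega⟩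
      intro h1
      obtain ⟨j0, hj0⟩ := hXval z0 h0
      obtain ⟨j1, hj1⟩ := hXval z1 h1
      have a1 := hg1 j0; have a2 := hg2 j0; have b1 := hg1 j1; have b2 := hg2 j1
      rw [hj0] at a1 a2; rw [hj1] at b1 b2
      have : j0 = j1 := Fin.ext (by omega)
      rw [this, hj1] at hj0
      rw [hj0] at hz1
      omega
    · exact ⟨z0, h0, by omega, by omega⟩
  obtain ⟨a, haX, hav⟩ := hpick0
  obtain ⟨b, hbX, hb1, hb2⟩ := hpickL
  have hvS : vt ∈ Finset.univ \ X := by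
    simp only [Finset.mem_sdiff, Finset.mem_univ, true_and]; exact hvX
  have haS : a ∈ Finset.univ \ X := by
    simp only [Finset.mem_sdiff, Finset.mem_univ, true_and]; exact haX
  have hbS : b ∈ Finset.univ \ X := by
    simp only [Finset.mem_sdiff, Finset.mem_univ, true_and]; exact hbX
  refine hX vt hvS (Relation.TransGen.head ⟨hvS, haS, ?_⟩
    (Relation.TransGen.head ⟨haS, hbS, ?_⟩
      (Relation.TransGen.single ⟨hbS, hvS, ?_⟩))) <;>
    · simp only [tArc]; omega

/-- For every `n ≥ 3` there is a tournament on `3n - 2` vertices with cop number `2`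
all of whose feedback vertex sets have size at least `n`. -/
theorem exists_tournament_copNumber_two_fvs_ge (n : ℕ) (hn : 3 ≤ n) :
    ∃ A : Fin (3 * n - 2) → Fin (3 * n - 2) → Prop,
      IsTournament A ∧ copNumber A = 2 ∧
      ∀ X : Finset (Fin (3 * n - 2)), AcyclicOn A (Finset.univ \ X) → n ≤ X.card := by
  refine ⟨tArc n, ⟨?_, ?_⟩, ?_, fun X hX => fvs_lower n hn X hX⟩
  · intro x
    have := x.isLt
    simp only [tArc]
    omega
  · intro u w hne
    have hne' : u.val ≠ w.val := fun h => hne (Fin.ext h)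
    have := u.isLt
    have := w.isLt
    simp only [tArc]
    omega
  · have h2 : 2 ∈ {k | ∃ W : ℕ → Finset (Fin (3*n-2)),
        UsesAtMost W k ∧ ∃ t, terr (tArc n) W t = ∅} :=
      ⟨copW n hn, fun i => copW_card n hn i, 3*(n-1), copW_win n hn⟩
    have hlb : ∀ k ∈ {k | ∃ W : ℕ → Finset (Fin (3*n-2)),
        UsesAtMost W k ∧ ∃ t, terr (tArc n) W t = ∅}, 2 ≤ k := by
      rintro k ⟨W, hWk, t, ht⟩
      by_contra hk
      push_neg at hk
      have hW1 : UsesAtMost W 1 := fun i => le_trans (hWk i) (by omega)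
      have hinv := one_cop_invariant n hn W hW1 t
      rw [ht] at hinv
      simp at hinv
    unfold copNumber
    exact le_antisymm (Nat.sInf_le h2) (hlb _ (Nat.sInf_mem ⟨2, h2⟩))
end

section
/- Let D = (V, A) be a finite digraph with adjacency matrix B (the V × V matrix over the natural numbers with B_{u,v} = 1 if (u,v) ∈ A and 0 otherwise), and for W ⊆ V let Ī_W be the V × V diagonal matrix with diagonal entry 0 at each vertex of W and 1 at each vertex not in W. Then a finite sequence W_1, W_2, ..., W_l of subsets of V satisfies R_l = ∅ (i.e., the cops playing W_1, ..., W_l capture the robber by step l) if and only if the matrix product Ī_{W_1} B Ī_{W_2} B ⋯ B Ī_{W_l} equals the zero matrix. -/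
open scoped Classical

/-- The adjacency matrix over `ℕ` of the digraph with arc relation `A`. -/
noncomputable def adjMat {V : Type} [Fintype V] (A : V → V → Prop) : Matrix V V ℕ :=
  fun u w => if A u w then 1 else 0

/-- The diagonal matrix `Ī_W`, with diagonal entry `0` at vertices of `W` and `1`
elsewhere. -/
noncomputable def diagCompl {V : Type} [Fintype V] [DecidableEq V] (W : Finset V) :
    Matrix V V ℕ :=
  Matrix.diagonal (fun v => if v ∈ W then 0 else 1)

/-- The product `Ī_{W_1} B Ī_{W_2} ⋯ B Ī_{W_{l+1}}` (0-indexed: `prodMat A W l`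
uses the cop sets `W 0, ..., W l`). -/
noncomputable def prodMat {V : Type} [Fintype V] [DecidableEq V]
    (A : V → V → Prop) (W : ℕ → Finset V) : ℕ → Matrix V V ℕ
  | 0 => diagCompl (W 0)
  | i + 1 => prodMat A W i * adjMat A * diagCompl (W (i + 1))

lemma mem_terr_iff {V : Type} [Fintype V] [DecidableEq V]
    (A : V → V → Prop) (W : ℕ → Finset V) (l : ℕ) (v : V) :
    v ∈ terr A W l ↔ ∃ u, prodMat A W l u v ≠ 0 := by
  induction l generalizing v with
  | zero =>
    simp only [terr, prodMat, diagCompl, Matrix.diagonal, Matrix.of_apply,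
      Finset.mem_sdiff, Finset.mem_univ, true_and]
    constructor
    · intro hv
      exact ⟨v, by simp [hv]⟩
    · rintro ⟨u, hu⟩
      by_contra hv
      apply hu
      by_cases h : u = v <;> simp [h, hv]
  | succ i ih =>
    simp only [terr, Nplus, Finset.mem_sdiff, Finset.mem_filter, Finset.mem_univ, true_and]
    constructor
    · rintro ⟨⟨x, hx, hAx⟩, hvW⟩
      obtain ⟨u, hu⟩ := (ih x).mp hx
      refine ⟨u, ?_⟩
      show (prodMat A W i * adjMat A * diagCompl (W (i+1))) u v ≠ 0
      rw [Matrix.mul_apply]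
      simp only [diagCompl, Matrix.diagonal, Matrix.of_apply]
      intro hzero
      rw [Finset.sum_eq_zero_iff] at hzero
      have := hzero v (Finset.mem_univ v)
      rw [if_pos rfl, if_neg hvW, mul_one, Matrix.mul_apply, Finset.sum_eq_zero_iff] at this
      have := this x (Finset.mem_univ x)
      simp only [adjMat, if_pos hAx, mul_one] at this
      exact hu this
    · rintro ⟨u, hu⟩
      simp only [prodMat] at hu
      rw [Matrix.mul_apply] at hu
      obtain ⟨w, _, hw⟩ := Finset.exists_ne_zero_of_sum_ne_zero hu
      simp only [diagCompl, Matrix.diagonal, Matrix.of_apply] at hw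
      by_cases hwv : w = v
      · subst hwv
        by_cases hW : w ∈ W (i+1)
        · simp [hW] at hw
        · refine ⟨?_, hW⟩
          rw [if_pos rfl, if_neg hW, mul_one, Matrix.mul_apply] at hw
          obtain ⟨x, _, hx⟩ := Finset.exists_ne_zero_of_sum_ne_zero hw
          simp only [adjMat] at hx
          by_cases hA : A x w
          · exact ⟨x, (ih x).mpr ⟨u, fun h => hx (by simp [h])⟩, hA⟩
          · simp [hA] at hx
      · simp [hwv] at hw

/-- The cops playing `W_1, ..., W_l` capture the robber by step `l` (i.e. `R_l = ∅`)
iff `Ī_{W_1} B Ī_{W_2} ⋯ B Ī_{W_l} = 0`.  (Here `l` is 0-indexed: the sequence of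
cop sets is `W 0, ..., W l`.) -/
theorem terr_empty_iff_prodMat_zero {V : Type} [Fintype V] [DecidableEq V]
    (A : V → V → Prop) (W : ℕ → Finset V) (l : ℕ) :
    terr A W l = ∅ ↔ prodMat A W l = 0 := by
  constructor
  · intro h
    ext u v
    by_contra hne
    have : v ∈ terr A W l := (mem_terr_iff A W l v).mpr ⟨u, by simpa using hne⟩
    simp [h] at this
  · intro h
    rw [Finset.eq_empty_iff_forall_notMem]
    intro v hv
    obtain ⟨u, hu⟩ := (mem_terr_iff A W l v).mp hv
    simp [h] at hu
end

section
/- For any finite digraph D, cn(D) = cn(D⃖), where D⃖ is the reverse digraph of D obtained by reversing the direction of every arc. -/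
open scoped Classical

/-!
A robber standing on `v` at time `t` is a walk `x 0 → x 1 → ⋯ → x t = v` whose `i`-th vertex
avoids the cops `W i`, so a strategy wins by time `t` exactly when no such walk exists. Reading
a walk backwards gives a walk of the reverse digraph avoiding the cop sets played in reverse
order `W t, …, W 0`; hence a winning strategy for `D` played backwards wins on `D⃖` with the
same number of cops, and symmetrically.
-/

section Evasion

variable {V : Type} (A : V → V → Prop) (W : ℕ → Finset V)

def Evades (t : ℕ) (x : ℕ → V) : Prop :=
  (∀ i < t, A (x i) (x (i + 1))) ∧ ∀ i ≤ t, x i ∉ W i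

variable {A W}

theorem Evades.reverse {W' : ℕ → Finset V} {t : ℕ} {x : ℕ → V} (h : Evades A W t x)
    (hW' : ∀ i ≤ t, W' i = W (t - i)) :
    Evades (fun u w => A w u) W' t (fun i => x (t - i)) := by
  refine ⟨fun i hi => ?_, fun i hi => ?_⟩
  · have harc := h.1 (t - (i + 1)) (by omega)
    rwa [show t - (i + 1) + 1 = t - i by omega] at harc
  · rw [hW' i hi]
    exact h.2 (t - i) (Nat.sub_le t i)

variable [Fintype V] [DecidableEq V]

theorem mem_terr_iff_exists_evades {t : ℕ} {v : V} :
    v ∈ terr A W t ↔ ∃ x : ℕ → V, x t = v ∧ Evades A W t x := by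
  induction t generalizing v with
  | zero =>
    simp only [terr, Finset.mem_sdiff, Finset.mem_univ, true_and, Evades, Nat.not_lt_zero,
      Nat.le_zero, forall_eq, IsEmpty.forall_iff, implies_true]
    exact ⟨fun hv => ⟨fun _ => v, rfl, hv⟩, fun ⟨x, hx, hW⟩ => hx ▸ hW⟩
  | succ t ih =>
    simp only [terr, Finset.mem_sdiff, Nplus, Finset.mem_filter, Finset.mem_univ, true_and]
    constructor
    · rintro ⟨⟨u, hu, huv⟩, hv⟩
      obtain ⟨x, rfl, harc, hcop⟩ := ih.mp hu
      refine ⟨Function.update x (t + 1) v, by simp, fun i hi => ?_, fun i hi => ?_⟩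
      · rcases Nat.lt_succ_iff_lt_or_eq.mp hi with hi | rfl
        · simpa [Function.update_of_ne (show i ≠ t + 1 by omega),
            Function.update_of_ne (show i + 1 ≠ t + 1 by omega)] using harc i hi
        · simpa using huv
      · rcases Nat.le_succ_iff.mp hi with hi | rfl
        · simpa [Function.update_of_ne (show i ≠ t + 1 by omega)] using hcop i hi
        · simpa using hv
    · rintro ⟨x, rfl, harc, hcop⟩
      refine ⟨⟨x t, ih.mpr ⟨x, rfl, fun i hi => harc i (by omega), fun i hi => hcop i (by omega)⟩,
        harc t (by omega)⟩, hcop (t + 1) le_rfl⟩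

theorem terr_eq_empty_iff {t : ℕ} : terr A W t = ∅ ↔ ∀ x : ℕ → V, ¬ Evades A W t x := by
  simp only [Finset.eq_empty_iff_forall_notMem, mem_terr_iff_exists_evades]
  exact ⟨fun h x hx => h (x t) ⟨x, rfl, hx⟩, fun h v ⟨x, _, hx⟩ => h x hx⟩

theorem terr_reverse_eq_empty {t : ℕ} (h : terr A W t = ∅) :
    terr (fun u w => A w u) (fun i => W (t - i)) t = ∅ := by
  rw [terr_eq_empty_iff] at h ⊢
  exact fun x hx => h _ (hx.reverse fun i hi => by rw [Nat.sub_sub_self hi])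

end Evasion

theorem exists_winning_reverse {V : Type} [Fintype V] [DecidableEq V] {A : V → V → Prop} {k : ℕ}
    (h : ∃ W : ℕ → Finset V, UsesAtMost W k ∧ ∃ t, terr A W t = ∅) :
    ∃ W : ℕ → Finset V, UsesAtMost W k ∧ ∃ t, terr (fun u w => A w u) W t = ∅ := by
  obtain ⟨W, hW, t, ht⟩ := h
  exact ⟨fun i => W (t - i), fun i => hW (t - i), t, terr_reverse_eq_empty ht⟩

/-- A digraph and its reverse digraph have the same cop number. -/
theorem copNumber_reverse {V : Type} [Fintype V] [DecidableEq V] (A : V → V → Prop) :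
    copNumber A = copNumber (fun u w => A w u) := by
  unfold copNumber
  congr 1
  ext k
  exact ⟨exists_winning_reverse, exists_winning_reverse⟩
end
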